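/- arXiv:2202.01250 — 5 statements merged into one kernel-verified Lean document; each statement's English description precedes it below -/
import Mathlib

section
/- Let {M_t}_{t∈ℕ} be a square-integrable martingale with M_0 = 0 adapted to a filtration {F_t}_{t∈ℕ}, and let V_t = E[(M_t − M_{t−1})² | F_{t−1}]. Then for all real numbers a, b > 0, P(∃ t ∈ ℕ⁺ such that M_t ≥ a + b·Σ_{i=1}^t V_i) ≤ 1/(ab + 1). -/
open MeasureTheory ProbabilityTheory Filter
open scoped Classical

section DSaux

variable {Ω : Type*}

/-- partial sum of predictable variances -/
noncomputable def dsS (W : ℕ → Ω → ℝ) (t : ℕ) (ω : Ω) : ℝ := ∑ i ∈ Finset.Icc 1 t, W i ω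

/-- distance to the boundary -/
noncomputable def dsD (M W : ℕ → Ω → ℝ) (a b : ℝ) (t : ℕ) (ω : Ω) : ℝ :=
  a + b * dsS W t ω - M t ω

/-- event: not yet hit by time n -/
def dsG (M W : ℕ → Ω → ℝ) (a b : ℝ) (n : ℕ) : Set Ω :=
  {ω | ∀ k, k ≤ n → 1 ≤ k → 0 < dsD M W a b k ω}

/-- the stopped supermartingale -/
noncomputable def dsZ (M W : ℕ → Ω → ℝ) (a b : ℝ) (n : ℕ) : Ω → ℝ :=
  (dsG M W a b n).piecewise (fun ω => (1 + b * dsD M W a b n ω)⁻¹) 1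

lemma ds_key1 (b c v y : ℝ) (hb : 0 < b) (hc : 0 < c) (hv : 0 ≤ v) :
    (1 + b * max (c + b * v - y) 0)⁻¹ ≤
      (1 + b * (c + b * v))⁻¹ + b / (1 + b * (c + b * v)) ^ 2 * y
        + b ^ 2 / (1 + b * (c + b * v)) ^ 2 * y ^ 2 := by
  set g := 1 + b * (c + b * v) with hgdef
  have hg1 : 1 < g := by rw [hgdef]; nlinarith [mul_pos hb hc, mul_nonneg (mul_nonneg hb.le hb.le) hv]
  have hg0 : (0:ℝ) < g := by linarith
  rcases le_or_gt y (c + b * v) with h | h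
  · have hmax : max (c + b * v - y) 0 = c + b * v - y := max_eq_left (by linarith)
    have heq : 1 + b * (c + b * v - y) = g - b * y := by rw [hgdef]; ring
    rw [hmax, heq]
    have hby : b * y ≤ g - 1 := by rw [hgdef]; nlinarith [mul_pos hb hc, mul_nonneg (mul_nonneg hb.le hb.le) hv]
    have h1 : (0:ℝ) < g - b * y := by linarith
    have key : (g⁻¹ + b / g ^ 2 * y + b ^ 2 / g ^ 2 * y ^ 2) - (g - b * y)⁻¹
        = (b * y) ^ 2 * (g - 1 - b * y) / (g ^ 2 * (g - b * y)) := by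
      field_simp
      ring
    have hnum : 0 ≤ (b * y) ^ 2 * (g - 1 - b * y) / (g ^ 2 * (g - b * y)) :=
      div_nonneg (mul_nonneg (sq_nonneg _) (by linarith)) (by positivity)
    linarith [key ▸ hnum]
  · have hmax : max (c + b * v - y) 0 = 0 := max_eq_right (by linarith)
    rw [hmax, mul_zero, add_zero, inv_one]
    have hby : g - 1 < b * y := by rw [hgdef]; nlinarith [mul_pos hb hc, mul_nonneg (mul_nonneg hb.le hb.le) hv]
    have hrw : g⁻¹ + b / g ^ 2 * y + b ^ 2 / g ^ 2 * y ^ 2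
        = (g + b * y + (b * y) ^ 2) / g ^ 2 := by field_simp
    rw [hrw, le_div_iff₀ (by positivity)]
    nlinarith [mul_nonneg (sub_nonneg.2 hby.le) (by nlinarith : (0:ℝ) ≤ b * y + g)]

lemma ds_key2 (b c v : ℝ) (hb : 0 < b) (hc : 0 < c) (hv : 0 ≤ v) :
    (1 + b * (c + b * v))⁻¹ + b ^ 2 / (1 + b * (c + b * v)) ^ 2 * v ≤ (1 + b * c)⁻¹ := by
  set g := 1 + b * (c + b * v) with hgdef
  have hg0 : (0:ℝ) < g := by rw [hgdef]; nlinarith [mul_pos hb hc, mul_nonneg (mul_nonneg hb.le hb.le) hv]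
  have hc0 : (0:ℝ) < 1 + b * c := by nlinarith
  have key : (1 + b * c)⁻¹ - (g⁻¹ + b ^ 2 / g ^ 2 * v)
      = b ^ 4 * v ^ 2 / (g ^ 2 * (1 + b * c)) := by
    field_simp
    ring
  have hnum : 0 ≤ b ^ 4 * v ^ 2 / (g ^ 2 * (1 + b * c)) := by positivity
  linarith [key ▸ hnum]

variable {mΩ : MeasurableSpace Ω} {P : Measure Ω} [IsProbabilityMeasure P]
  {ℱ : Filtration ℕ mΩ} {M W : ℕ → Ω → ℝ} {a b : ℝ}

lemma dsD_zero (hM0 : ∀ ω, M 0 ω = 0) (ω : Ω) : dsD M W a b 0 ω = a := by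
  simp [dsD, dsS, hM0 ω, Finset.Icc_eq_empty (by omega : ¬ (1:ℕ) ≤ 0)]

lemma dsD_succ (n : ℕ) (ω : Ω) :
    dsD M W a b (n + 1) ω = dsD M W a b n ω + b * W (n + 1) ω - (M (n+1) ω - M n ω) := by
  simp only [dsD, dsS]
  rw [Finset.sum_Icc_succ_top (by omega : 1 ≤ n + 1)]
  ring

lemma dsG_anti {n m : ℕ} (h : n ≤ m) : dsG M W a b m ⊆ dsG M W a b n :=
  fun ω hω k hk h1 => hω k (hk.trans h) h1

lemma mem_dsG_succ {n : ℕ} {ω : Ω} :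
    ω ∈ dsG M W a b (n + 1) ↔ ω ∈ dsG M W a b n ∧ 0 < dsD M W a b (n + 1) ω := by
  constructor
  · exact fun h => ⟨dsG_anti (Nat.le_succ n) h, h (n + 1) le_rfl (by omega)⟩
  · rintro ⟨h1, h2⟩ k hk hk1
    rcases Nat.lt_or_ge k (n + 1) with hk' | hk'
    · exact h1 k (by omega) hk1
    · have : k = n + 1 := by omega
      subst this; exact h2

lemma dsD_pos_on_G (hM0 : ∀ ω, M 0 ω = 0) (ha : 0 < a) {n : ℕ} {ω : Ω}
    (hω : ω ∈ dsG M W a b n) : 0 < dsD M W a b n ω := by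
  cases n with
  | zero => rw [dsD_zero hM0]; exact ha
  | succ m => exact hω (m + 1) le_rfl (by omega)

lemma dsZ_nonneg (hM0 : ∀ ω, M 0 ω = 0) (ha : 0 < a) (hb : 0 < b) (n : ℕ) (ω : Ω) :
    0 ≤ dsZ M W a b n ω := by
  by_cases hω : ω ∈ dsG M W a b n
  · rw [dsZ, Set.piecewise_eq_of_mem _ _ _ hω]
    have := dsD_pos_on_G hM0 ha hω
    positivity
  · rw [dsZ, Set.piecewise_eq_of_notMem _ _ _ hω]; norm_num

lemma dsZ_le_one (hM0 : ∀ ω, M 0 ω = 0) (ha : 0 < a) (hb : 0 < b) (n : ℕ) (ω : Ω) :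
    dsZ M W a b n ω ≤ 1 := by
  by_cases hω : ω ∈ dsG M W a b n
  · rw [dsZ, Set.piecewise_eq_of_mem _ _ _ hω]
    have hD := dsD_pos_on_G hM0 ha hω
    have h1 : (1:ℝ) ≤ 1 + b * dsD M W a b n ω := by nlinarith
    rw [inv_le_one_iff₀]; right; exact h1
  · rw [dsZ, Set.piecewise_eq_of_notMem _ _ _ hω]; simp

lemma dsD_sm (hM : Martingale M ℱ P)
    (hWm : ∀ t, StronglyMeasurable[ℱ t] (W (t + 1))) (t : ℕ) :
    StronglyMeasurable[ℱ t] (fun ω => dsD M W a b t ω) := by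
  have hS : StronglyMeasurable[ℱ t] (fun ω => dsS W t ω) := by
    apply Finset.stronglyMeasurable_fun_sum
    intro i hi
    rw [Finset.mem_Icc] at hi
    have h1 : i - 1 + 1 = i := by omega
    have := hWm (i - 1)
    rw [h1] at this
    exact this.mono (ℱ.mono (by omega : i - 1 ≤ t))
  exact ((stronglyMeasurable_const.add (stronglyMeasurable_const.mul hS)).sub (hM.stronglyAdapted t))

lemma dsG_ms (hM : Martingale M ℱ P)
    (hWm : ∀ t, StronglyMeasurable[ℱ t] (W (t + 1))) (n : ℕ) :
    MeasurableSet[ℱ n] (dsG M W a b n) := by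
  have : dsG M W a b n = ⋂ (k : ℕ) (_ : k ≤ n) (_ : 1 ≤ k), {ω | 0 < dsD M W a b k ω} := by
    ext ω; simp [dsG]
  rw [this]
  refine MeasurableSet.iInter fun k => MeasurableSet.iInter fun hk =>
    MeasurableSet.iInter fun _ => ?_
  have hD := (dsD_sm (a := a) (b := b) hM hWm k).mono (ℱ.mono hk)
  exact hD.measurable measurableSet_Ioi

lemma dsZ_sm (hM : Martingale M ℱ P)
    (hWm : ∀ t, StronglyMeasurable[ℱ t] (W (t + 1))) (n : ℕ) :
    StronglyMeasurable[ℱ n] (dsZ M W a b n) := by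
  refine StronglyMeasurable.piecewise (dsG_ms hM hWm n) ?_ stronglyMeasurable_const
  have h := (dsD_sm (a := a) (b := b) hM hWm n).measurable
  exact ((measurable_const.add (measurable_const.mul h)).inv).stronglyMeasurable

lemma dsZ_int (hM : Martingale M ℱ P)
    (hWm : ∀ t, StronglyMeasurable[ℱ t] (W (t + 1)))
    (hM0 : ∀ ω, M 0 ω = 0) (ha : 0 < a) (hb : 0 < b) (n : ℕ) :
    Integrable (dsZ M W a b n) P := by
  refine ⟨((dsZ_sm hM hWm n).mono (ℱ.le n)).aestronglyMeasurable, ?_⟩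
  refine HasFiniteIntegral.of_bounded (C := 1) (ae_of_all _ fun ω => ?_)
  rw [Real.norm_eq_abs, abs_le]
  exact ⟨by linarith [dsZ_nonneg (M := M) (W := W) hM0 ha hb n ω],
    dsZ_le_one hM0 ha hb n ω⟩

end DSaux

section DSstep

variable {Ω : Type*} {mΩ : MeasurableSpace Ω} {P : Measure Ω} [IsProbabilityMeasure P]
  {ℱ : Filtration ℕ mΩ} {M W : ℕ → Ω → ℝ} {a b : ℝ}

lemma ds_step (hM : Martingale M ℱ P) (hM2 : ∀ t, MemLp (M t) 2 P)
    (hM0 : ∀ ω, M 0 ω = 0)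
    (hWm : ∀ t, StronglyMeasurable[ℱ t] (W (t + 1)))
    (hW0 : ∀ t ω, 0 ≤ W t ω)
    (hWce : ∀ t, W (t + 1) =ᵐ[P] P[fun ω => (M (t + 1) ω - M t ω) ^ 2 | ℱ t])
    (ha : 0 < a) (hb : 0 < b) (n : ℕ) :
    ∫ ω, dsZ M W a b (n + 1) ω ∂P ≤ ∫ ω, dsZ M W a b n ω ∂P := by
  set G := dsG M W a b n with hGdef
  set y : Ω → ℝ := fun ω => M (n + 1) ω - M n ω with hydef
  set gg : Ω → ℝ := fun ω => max (1 + b * (dsD M W a b n ω + b * W (n + 1) ω)) 1 with hggdef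
  set α : Ω → ℝ := fun ω => (gg ω)⁻¹ with hαdef
  set β : Ω → ℝ := fun ω => b / gg ω ^ 2 with hβdef
  set γ : Ω → ℝ := fun ω => b ^ 2 / gg ω ^ 2 with hγdef
  have hGm : MeasurableSet[ℱ n] G := dsG_ms hM hWm n
  have hGm0 : MeasurableSet G := ℱ.le n _ hGm
  have hgg1 : ∀ ω, (1:ℝ) ≤ gg ω := fun ω => le_max_right _ _
  have hgg0 : ∀ ω, (0:ℝ) < gg ω := fun ω => lt_of_lt_of_le one_pos (hgg1 ω)
  have hggm : Measurable[ℱ n] gg :=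
    ((measurable_const.add (measurable_const.mul
      ((dsD_sm hM hWm n).measurable.add
        (measurable_const.mul (hWm n).measurable)))).max measurable_const)
  have hαsm : StronglyMeasurable[ℱ n] α := hggm.inv.stronglyMeasurable
  have hβsm : StronglyMeasurable[ℱ n] β :=
    (measurable_const.div (hggm.pow_const 2)).stronglyMeasurable
  have hγsm : StronglyMeasurable[ℱ n] γ :=
    (measurable_const.div (hggm.pow_const 2)).stronglyMeasurable
  have hα_bd : ∀ ω, ‖α ω‖ ≤ 1 := by
    intro ω
    show ‖(gg ω)⁻¹‖ ≤ 1
    have h0 := hgg0 ω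
    rw [Real.norm_eq_abs, abs_of_nonneg (by positivity), inv_eq_one_div,
      div_le_one h0]
    exact hgg1 ω
  have hβ_bd : ∀ ω, ‖β ω‖ ≤ b := by
    intro ω
    show ‖b / gg ω ^ 2‖ ≤ b
    have h0 := hgg0 ω
    rw [Real.norm_eq_abs, abs_of_nonneg (by positivity),
      div_le_iff₀ (by positivity)]
    have h1 : 1 ≤ gg ω ^ 2 := by nlinarith [hgg1 ω]
    nlinarith [mul_nonneg hb.le (sub_nonneg.2 h1)]
  have hγ_bd : ∀ ω, ‖γ ω‖ ≤ b ^ 2 := by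
    intro ω
    show ‖b ^ 2 / gg ω ^ 2‖ ≤ b ^ 2
    have h0 := hgg0 ω
    rw [Real.norm_eq_abs, abs_of_nonneg (by positivity),
      div_le_iff₀ (by positivity)]
    have h1 : 1 ≤ gg ω ^ 2 := by nlinarith [hgg1 ω]
    nlinarith [mul_nonneg (sq_nonneg b) (sub_nonneg.2 h1)]
  have hgg_eq : ∀ ω ∈ G, gg ω = 1 + b * (dsD M W a b n ω + b * W (n + 1) ω) := by
    intro ω hω
    have hc := dsD_pos_on_G hM0 ha hω
    have hv := hW0 (n + 1) ω
    exact max_eq_left (by nlinarith [mul_pos hb hc, mul_nonneg hb.le (mul_nonneg hb.le hv)])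
  -- pointwise domination
  have hZU : ∀ ω, dsZ M W a b (n + 1) ω ≤
      G.piecewise (fun ω => α ω + β ω * y ω + γ ω * y ω ^ 2) (dsZ M W a b n) ω := by
    intro ω
    by_cases hω : ω ∈ G
    · rw [Set.piecewise_eq_of_mem _ _ _ hω]
      have hc := dsD_pos_on_G hM0 ha hω
      have hv := hW0 (n + 1) ω
      have hD1 : dsD M W a b (n + 1) ω
          = dsD M W a b n ω + b * W (n + 1) ω - y ω := dsD_succ n ω
      have hzval : dsZ M W a b (n + 1) ω
          = (1 + b * max (dsD M W a b (n + 1) ω) 0)⁻¹ := by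
        by_cases h2 : 0 < dsD M W a b (n + 1) ω
        · rw [dsZ, Set.piecewise_eq_of_mem _ _ _ (mem_dsG_succ.2 ⟨hω, h2⟩),
            max_eq_left h2.le]
        · rw [dsZ, Set.piecewise_eq_of_notMem _ _ _
            (fun hmem => h2 (mem_dsG_succ.1 hmem).2), max_eq_right (not_lt.1 h2),
            mul_zero, add_zero, inv_one, Pi.one_apply]
      rw [hzval, hD1]
      have hkey := ds_key1 b (dsD M W a b n ω) (W (n + 1) ω) (y ω) hb hc hv
      rw [← hgg_eq ω hω] at hkey
      exact hkey
    · rw [Set.piecewise_eq_of_notMem _ _ _ hω]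
      have h1 : dsZ M W a b (n + 1) ω = 1 := by
        rw [dsZ, Set.piecewise_eq_of_notMem _ _ _
          (fun hmem => hω (dsG_anti (Nat.le_succ n) hmem)), Pi.one_apply]
      have h2 : dsZ M W a b n ω = 1 := by
        rw [dsZ, Set.piecewise_eq_of_notMem _ _ _ hω, Pi.one_apply]
      rw [h1, h2]
  -- integrability
  have hbint : ∀ (f : Ω → ℝ) (C : ℝ), StronglyMeasurable[ℱ n] f → (∀ ω, ‖f ω‖ ≤ C) →
      Integrable f P := fun f C hf hC =>
    ⟨(hf.mono (ℱ.le n)).aestronglyMeasurable, HasFiniteIntegral.of_bounded (ae_of_all _ hC)⟩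
  have hyL2 : MemLp y 2 P := (hM2 (n + 1)).sub (hM2 n)
  have hyI : Integrable y P := hyL2.integrable one_le_two
  have hy2I : Integrable (fun ω => y ω ^ 2) P := hyL2.integrable_sq
  have hαI : Integrable α P := hbint α 1 hαsm hα_bd
  have hβyI : Integrable (fun ω => β ω * y ω) P :=
    hyI.bdd_mul ((hβsm.mono (ℱ.le n)).aestronglyMeasurable) (ae_of_all _ hβ_bd)
  have hγy2I : Integrable (fun ω => γ ω * y ω ^ 2) P :=
    hy2I.bdd_mul ((hγsm.mono (ℱ.le n)).aestronglyMeasurable) (ae_of_all _ hγ_bd)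
  have hfI : Integrable (fun ω => α ω + β ω * y ω + γ ω * y ω ^ 2) P :=
    (hαI.add hβyI).add hγy2I
  have hZnI : Integrable (dsZ M W a b n) P := dsZ_int hM hWm hM0 ha hb n
  have hZn1I : Integrable (dsZ M W a b (n + 1)) P := dsZ_int hM hWm hM0 ha hb (n + 1)
  have hUI : Integrable
      (G.piecewise (fun ω => α ω + β ω * y ω + γ ω * y ω ^ 2) (dsZ M W a b n)) P := by
    rw [← Set.indicator_add_compl_eq_piecewise]
    exact (hfI.integrableOn.integrable_indicator hGm0).add
      (hZnI.integrableOn.integrable_indicator hGm0.compl)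
  have step1 : ∫ ω, dsZ M W a b (n + 1) ω ∂P ≤
      ∫ ω, G.piecewise (fun ω => α ω + β ω * y ω + γ ω * y ω ^ 2) (dsZ M W a b n) ω ∂P :=
    integral_mono hZn1I hUI hZU
  have step2 : ∫ ω, G.piecewise (fun ω => α ω + β ω * y ω + γ ω * y ω ^ 2)
        (dsZ M W a b n) ω ∂P
      = (∫ ω in G, (α ω + β ω * y ω + γ ω * y ω ^ 2) ∂P)
        + ∫ ω in Gᶜ, dsZ M W a b n ω ∂P :=
    integral_piecewise hGm0 hfI.integrableOn hZnI.integrableOn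
  have step3 : ∫ ω in G, (α ω + β ω * y ω + γ ω * y ω ^ 2) ∂P
      = (∫ ω in G, (α ω + β ω * y ω) ∂P) + ∫ ω in G, γ ω * y ω ^ 2 ∂P :=
    integral_add ((hαI.add hβyI).integrableOn) hγy2I.integrableOn
  have step3b : ∫ ω in G, (α ω + β ω * y ω) ∂P
      = (∫ ω in G, α ω ∂P) + ∫ ω in G, β ω * y ω ∂P :=
    integral_add hαI.integrableOn hβyI.integrableOn
  -- the martingale term vanishes
  have hmid : ∫ ω in G, β ω * y ω ∂P = 0 := by
    rw [← integral_indicator hGm0]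
    have hind : G.indicator (fun ω => β ω * y ω) = fun ω => (G.indicator β ω) * y ω := by
      ext ω
      by_cases hω : ω ∈ G <;>
        simp [Set.indicator_of_mem, Set.indicator_of_notMem, hω]
    rw [hind]
    have hBfsm : StronglyMeasurable[ℱ n] (G.indicator β) := hβsm.indicator hGm
    have hBf_bd : ∀ ω, ‖G.indicator β ω‖ ≤ b := by
      intro ω
      by_cases hω : ω ∈ G
      · rw [Set.indicator_of_mem hω]; exact hβ_bd ω
      · rw [Set.indicator_of_notMem hω]; simp [hb.le]
    have hBfyI : Integrable (fun ω => G.indicator β ω * y ω) P :=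
      hyI.bdd_mul ((hBfsm.mono (ℱ.le n)).aestronglyMeasurable) (ae_of_all _ hBf_bd)
    have hpull : P[(G.indicator β) * y|ℱ n] =ᵐ[P] (G.indicator β) * P[y|ℱ n] :=
      condExp_mul_of_stronglyMeasurable_left hBfsm hBfyI hyI
    have hy0 : P[y|ℱ n] =ᵐ[P] 0 := by
      have h1 : P[M (n + 1) - M n|ℱ n] =ᵐ[P] P[M (n + 1)|ℱ n] - P[M n|ℱ n] :=
        condExp_sub (hM.integrable (n + 1)) (hM.integrable n) _
      have h2 := hM.condExp_ae_eq (Nat.le_succ n)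
      have h3 : P[M n|ℱ n] = M n :=
        condExp_of_stronglyMeasurable (ℱ.le n) (hM.stronglyAdapted n) (hM.integrable n)
      have : P[y|ℱ n] =ᵐ[P] P[M (n + 1)|ℱ n] - P[M n|ℱ n] := h1
      filter_upwards [this, h2] with ω e1 e2
      rw [Pi.zero_apply, e1, Pi.sub_apply, e2, h3, sub_self]
    calc ∫ ω, G.indicator β ω * y ω ∂P
        = ∫ ω, (P[(G.indicator β) * y|ℱ n]) ω ∂P := (integral_condExp (ℱ.le n)).symm
      _ = ∫ ω, ((G.indicator β) * P[y|ℱ n]) ω ∂P := integral_congr_ae hpull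
      _ = ∫ ω, (0:ℝ) ∂P := by
          refine integral_congr_ae ?_
          filter_upwards [hy0] with ω h
          rw [Pi.mul_apply, h, Pi.zero_apply, mul_zero]
      _ = 0 := integral_zero _ _
  -- the variance term
  have hWce' : W (n + 1) =ᵐ[P] P[fun ω => y ω ^ 2|ℱ n] := hWce n
  have hWI : Integrable (W (n + 1)) P := integrable_condExp.congr hWce'.symm
  have hvar : ∫ ω in G, γ ω * y ω ^ 2 ∂P = ∫ ω in G, γ ω * W (n + 1) ω ∂P := by
    rw [← integral_indicator hGm0, ← integral_indicator hGm0]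
    have hind : ∀ (f : Ω → ℝ), G.indicator (fun ω => γ ω * f ω)
        = fun ω => (G.indicator γ ω) * f ω := by
      intro f; ext ω
      by_cases hω : ω ∈ G <;>
        simp [Set.indicator_of_mem, Set.indicator_of_notMem, hω]
    rw [hind, hind]
    have hCfsm : StronglyMeasurable[ℱ n] (G.indicator γ) := hγsm.indicator hGm
    have hCf_bd : ∀ ω, ‖G.indicator γ ω‖ ≤ b ^ 2 := by
      intro ω
      by_cases hω : ω ∈ G
      · rw [Set.indicator_of_mem hω]; exact hγ_bd ω
      · rw [Set.indicator_of_notMem hω]; simp [sq_nonneg b]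
    have hCfy2I : Integrable (fun ω => G.indicator γ ω * y ω ^ 2) P :=
      hy2I.bdd_mul ((hCfsm.mono (ℱ.le n)).aestronglyMeasurable) (ae_of_all _ hCf_bd)
    have hpull : P[(G.indicator γ) * (fun ω => y ω ^ 2)|ℱ n]
        =ᵐ[P] (G.indicator γ) * P[fun ω => y ω ^ 2|ℱ n] :=
      condExp_mul_of_stronglyMeasurable_left hCfsm hCfy2I hy2I
    calc ∫ ω, G.indicator γ ω * y ω ^ 2 ∂P
        = ∫ ω, (P[(G.indicator γ) * (fun ω => y ω ^ 2)|ℱ n]) ω ∂P :=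
          (integral_condExp (ℱ.le n)).symm
      _ = ∫ ω, ((G.indicator γ) * P[fun ω => y ω ^ 2|ℱ n]) ω ∂P := integral_congr_ae hpull
      _ = ∫ ω, G.indicator γ ω * W (n + 1) ω ∂P := by
          refine integral_congr_ae ?_
          filter_upwards [hWce'] with ω h
          rw [Pi.mul_apply, ← h]
  have hγWI : Integrable (fun ω => γ ω * W (n + 1) ω) P :=
    hWI.bdd_mul ((hγsm.mono (ℱ.le n)).aestronglyMeasurable) (ae_of_all _ hγ_bd)
  have step4 : (∫ ω in G, α ω ∂P) + ∫ ω in G, γ ω * W (n + 1) ω ∂P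
      = ∫ ω in G, (α ω + γ ω * W (n + 1) ω) ∂P :=
    (integral_add hαI.integrableOn hγWI.integrableOn).symm
  have step5 : ∫ ω in G, (α ω + γ ω * W (n + 1) ω) ∂P ≤ ∫ ω in G, dsZ M W a b n ω ∂P := by
    refine setIntegral_mono_on (hαI.add hγWI).integrableOn hZnI.integrableOn hGm0 ?_
    intro ω hω
    have hc := dsD_pos_on_G hM0 ha hω
    have hv := hW0 (n + 1) ω
    have hz : dsZ M W a b n ω = (1 + b * dsD M W a b n ω)⁻¹ := by
      rw [dsZ, Set.piecewise_eq_of_mem _ _ _ hω]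
    have hkey := ds_key2 b (dsD M W a b n ω) (W (n + 1) ω) hb hc hv
    rw [← hgg_eq ω hω] at hkey
    rw [hz]
    exact hkey
  have step6 : (∫ ω in G, dsZ M W a b n ω ∂P) + ∫ ω in Gᶜ, dsZ M W a b n ω ∂P
      = ∫ ω, dsZ M W a b n ω ∂P := integral_add_compl hGm0 hZnI
  calc ∫ ω, dsZ M W a b (n + 1) ω ∂P
      ≤ _ := step1
    _ = _ := step2
    _ = (∫ ω in G, α ω ∂P) + (∫ ω in G, β ω * y ω ∂P) + (∫ ω in G, γ ω * y ω ^ 2 ∂P)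
        + ∫ ω in Gᶜ, dsZ M W a b n ω ∂P := by rw [step3, step3b]
    _ = (∫ ω in G, (α ω + γ ω * W (n + 1) ω) ∂P) + ∫ ω in Gᶜ, dsZ M W a b n ω ∂P := by
        rw [hmid, hvar, add_zero, step4]
    _ ≤ (∫ ω in G, dsZ M W a b n ω ∂P) + ∫ ω in Gᶜ, dsZ M W a b n ω ∂P := by
        exact add_le_add_left step5 _
    _ = ∫ ω, dsZ M W a b n ω ∂P := step6

end DSstep

/-- **Dubins–Savage inequality.** For a square-integrable martingale `M` with `M 0 = 0`
and predictable quadratic increments `V t = E[(M t - M (t-1))² | ℱ (t-1)]`, for all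
`a, b > 0`, `P(∃ t ≥ 1, M t ≥ a + b ∑_{i=1}^t V i) ≤ 1/(ab+1)`. -/
theorem dubins_savage_inequality
    {Ω : Type*} {mΩ : MeasurableSpace Ω} {P : Measure Ω} [IsProbabilityMeasure P]
    (ℱ : Filtration ℕ mΩ) (M V : ℕ → Ω → ℝ)
    (hM : Martingale M ℱ P)
    (hM2 : ∀ t, MemLp (M t) 2 P)
    (hM0 : ∀ ω, M 0 ω = 0)
    (hV : ∀ t, 1 ≤ t →
      V t =ᵐ[P] P[fun ω => (M t ω - M (t - 1) ω) ^ 2 | ℱ (t - 1)])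
    (a b : ℝ) (ha : 0 < a) (hb : 0 < b) :
    P {ω | ∃ t : ℕ, 1 ≤ t ∧ a + b * ∑ i ∈ Finset.Icc 1 t, V i ω ≤ M t ω} ≤
      ENNReal.ofReal (1 / (a * b + 1)) := by
  classical
  set W : ℕ → Ω → ℝ := fun t ω =>
    if t = 0 then 0
    else max ((P[fun ω' => (M t ω' - M (t - 1) ω') ^ 2 | ℱ (t - 1)]) ω) 0 with hWdef
  have hWm : ∀ t, StronglyMeasurable[ℱ t] (W (t + 1)) := by
    intro t
    have he : W (t + 1) = fun ω =>
        max ((P[fun ω' => (M (t + 1) ω' - M t ω') ^ 2 | ℱ t]) ω) 0 := by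
      funext ω
      rw [hWdef]
      simp only [Nat.add_sub_cancel, Nat.succ_ne_zero, if_false]
    rw [he]
    exact (stronglyMeasurable_condExp.measurable.max measurable_const).stronglyMeasurable
  have hW0 : ∀ t ω, 0 ≤ W t ω := by
    intro t ω
    rw [hWdef]
    dsimp only
    split
    · exact le_rfl
    · exact le_max_right _ _
  have hWce : ∀ t, W (t + 1) =ᵐ[P] P[fun ω => (M (t + 1) ω - M t ω) ^ 2 | ℱ t] := by
    intro t
    have hnn : (0:Ω → ℝ) ≤ᵐ[P] P[fun ω => (M (t + 1) ω - M t ω) ^ 2 | ℱ t] :=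
      condExp_nonneg (ae_of_all _ fun ω => sq_nonneg _)
    filter_upwards [hnn] with ω h
    rw [hWdef]
    simp only [Nat.add_sub_cancel, Nat.succ_ne_zero, if_false]
    exact max_eq_left h
  have hVW : ∀ᵐ ω ∂P, ∀ t, 1 ≤ t → V t ω = W t ω := by
    rw [ae_all_iff]
    intro t
    rcases Nat.eq_zero_or_pos t with rfl | ht
    · exact ae_of_all _ fun ω h => absurd h (by omega)
    · obtain ⟨s, rfl⟩ : ∃ s, t = s + 1 := ⟨t - 1, by omega⟩
      have h1 := hV (s + 1) (by omega)
      have h2 := hWce s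
      simp only [Nat.add_sub_cancel] at h1
      filter_upwards [h1, h2] with ω e1 e2
      intro _
      exact e1.trans e2.symm
  have hTE : P {ω | ∃ t : ℕ, 1 ≤ t ∧ a + b * ∑ i ∈ Finset.Icc 1 t, V i ω ≤ M t ω}
      = P {ω | ∃ t, 1 ≤ t ∧ dsD M W a b t ω ≤ 0} := by
    apply measure_congr
    rw [Filter.eventuallyEq_set]
    filter_upwards [hVW] with ω h
    have hsum : ∀ t : ℕ, ∑ i ∈ Finset.Icc 1 t, V i ω = ∑ i ∈ Finset.Icc 1 t, W i ω :=
      fun t => Finset.sum_congr rfl fun i hi => h i (Finset.mem_Icc.1 hi).1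
    constructor
    · rintro ⟨t, ht, hle⟩
      refine ⟨t, ht, ?_⟩
      simp only [dsD, dsS]
      rw [← hsum t]
      linarith
    · rintro ⟨t, ht, hle⟩
      refine ⟨t, ht, ?_⟩
      simp only [dsD, dsS] at hle
      rw [← hsum t] at hle
      linarith
  have hEU : {ω | ∃ t, 1 ≤ t ∧ dsD M W a b t ω ≤ 0} = ⋃ n, (dsG M W a b n)ᶜ := by
    ext ω
    simp only [Set.mem_setOf_eq, Set.mem_iUnion, Set.mem_compl_iff]
    constructor
    · rintro ⟨t, ht, hle⟩
      exact ⟨t, fun hG => absurd (hG t le_rfl ht) (not_lt.2 hle)⟩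
    · rintro ⟨n, hn⟩
      by_contra hE
      push_neg at hE
      exact hn fun k _ h1 => hE k h1
  have hZ0 : ∫ ω, dsZ M W a b 0 ω ∂P = (1 + b * a)⁻¹ := by
    have he : dsZ M W a b 0 = fun _ => (1 + b * a)⁻¹ := by
      funext ω
      have hmem : ω ∈ dsG M W a b 0 := fun k hk h1 => absurd (h1.trans hk) (by omega)
      rw [dsZ, Set.piecewise_eq_of_mem _ _ _ hmem, dsD_zero hM0]
    rw [he, integral_const]
    simp
  have hmono : ∀ n, ∫ ω, dsZ M W a b n ω ∂P ≤ (1 + b * a)⁻¹ := by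
    intro n
    induction n with
    | zero => rw [hZ0]
    | succ m ih => exact (ds_step hM hM2 hM0 hWm hW0 hWce ha hb m).trans ih
  have hba : (1 + b * a)⁻¹ = 1 / (a * b + 1) := by
    rw [one_div]
    ring_nf
  have hbound : ∀ n, P ((dsG M W a b n)ᶜ) ≤ ENNReal.ofReal (1 / (a * b + 1)) := by
    intro n
    have hGc : MeasurableSet ((dsG M W a b n)ᶜ) := (ℱ.le n _ (dsG_ms hM hWm n)).compl
    rw [ENNReal.le_ofReal_iff_toReal_le (measure_ne_top _ _) (by positivity)]
    have h1 : (P ((dsG M W a b n)ᶜ)).toReal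
        = ∫ ω, ((dsG M W a b n)ᶜ).indicator (fun _ => (1:ℝ)) ω ∂P := by
      rw [integral_indicator_const _ hGc, smul_eq_mul, mul_one, measureReal_def]
    have h2 : ∫ ω, ((dsG M W a b n)ᶜ).indicator (fun _ => (1:ℝ)) ω ∂P
        ≤ ∫ ω, dsZ M W a b n ω ∂P := by
      refine integral_mono ((integrable_const (1:ℝ)).indicator hGc)
        (dsZ_int hM hWm hM0 ha hb n) fun ω => ?_
      by_cases hω : ω ∈ dsG M W a b n
      · rw [Set.indicator_of_notMem (by simpa using hω)]
        exact dsZ_nonneg hM0 ha hb n ω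
      · rw [Set.indicator_of_mem (by simpa using hω), dsZ,
          Set.piecewise_eq_of_notMem _ _ _ hω, Pi.one_apply]
    rw [h1, ← hba]
    exact h2.trans (hmono n)
  rw [hTE, hEU]
  have hdir : Directed (· ⊆ ·) (fun n => (dsG M W a b n)ᶜ) := by
    have hmon : Monotone (fun n => (dsG M W a b n)ᶜ) :=
      fun i j hij => Set.compl_subset_compl.2 (dsG_anti hij)
    exact hmon.directed_le
  rw [Directed.measure_iUnion hdir]
  exact iSup_le hbound
end

section
/- Let {X_t}_{t∈ℕ⁺} be adapted to {F_t} with E[X_t | F_{t−1}] = μ and E[(X_t − μ)² | F_{t−1}] ≤ σ² almost surely for all t ∈ ℕ⁺, and let {λ_t}_{t∈ℕ⁺} be a predictable process with λ_t > 0. Define CI_t^{DS} = [ (Σ_{i=1}^t λ_i X_i − (2/α − 1 + σ² Σ_{i=1}^t λ_i²)) / Σ_{i=1}^t λ_i , (Σ_{i=1}^t λ_i X_i + (2/α − 1 + σ² Σ_{i=1}^t λ_i²)) / Σ_{i=1}^t λ_i ]. Then for any α ∈ (0,1), P(∀ t ∈ ℕ⁺, μ ∈ CI_t^{DS}) ≥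 1 − α. -/
open MeasureTheory ProbabilityTheory Filter


open MeasureTheory ProbabilityTheory Filter

noncomputable def dsPhi (x : ℝ) : ℝ := (1 + max x 0)⁻¹

lemma dsPhi_pos_denom (x : ℝ) : 0 < 1 + max x 0 := by positivity

lemma dsPhi_nonneg (x : ℝ) : 0 ≤ dsPhi x := by
  unfold dsPhi; positivity

lemma dsPhi_le_one (x : ℝ) : dsPhi x ≤ 1 := by
  unfold dsPhi
  rw [inv_le_one_iff₀]
  right; linarith [le_max_right x 0]

lemma dsPhi_of_nonneg {x : ℝ} (hx : 0 ≤ x) : dsPhi x = (1 + x)⁻¹ := by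
  unfold dsPhi; rw [max_eq_left hx]

lemma dsPhi_of_nonpos {x : ℝ} (hx : x ≤ 0) : dsPhi x = 1 := by
  unfold dsPhi; rw [max_eq_right hx]; norm_num

lemma dsPhi_continuous : Continuous dsPhi := by
  unfold dsPhi
  refine Continuous.inv₀ (by continuity) fun x => (dsPhi_pos_denom x).ne'

noncomputable def dsA (w δ : ℝ) : ℝ := if 0 ≤ w then ((1 + w + δ) ^ 2)⁻¹ else 0

lemma dsA_nonneg (w δ : ℝ) : 0 ≤ dsA w δ := by
  unfold dsA; split <;> positivity

/-- key pointwise inequality -/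
lemma dsPhi_step (w δ d : ℝ) (hδ : 0 ≤ δ) :
    dsPhi (w + δ - d) ≤ (dsPhi w - dsA w δ * δ) + dsA w δ * d + dsA w δ * d ^ 2 := by
  unfold dsA
  by_cases hw : 0 ≤ w
  · rw [if_pos hw, dsPhi_of_nonneg hw]
    have hq : (0:ℝ) < 1 + w + δ := by linarith
    have hq2 : (0:ℝ) < (1 + w + δ) ^ 2 := by positivity
    have hp : (0:ℝ) < 1 + w := by linarith
    have hbase : (1 + w + δ)⁻¹ + ((1 + w + δ) ^ 2)⁻¹ * δ ≤ (1 + w)⁻¹ := by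
      have h1 : (1 + w + δ)⁻¹ + ((1 + w + δ) ^ 2)⁻¹ * δ
          = (1 + w + δ + δ) / ((1 + w + δ) ^ 2) := by field_simp
      rw [h1, inv_eq_one_div, div_le_div_iff₀ hq2 hp]
      nlinarith [sq_nonneg δ]
    by_cases hd : d ≤ w + δ
    · have harg : 0 ≤ w + δ - d := by linarith
      rw [dsPhi_of_nonneg harg]
      have hr : (0:ℝ) < 1 + (w + δ - d) := by linarith
      have key : (1 + (w + δ - d))⁻¹
          ≤ (1 + w + δ)⁻¹ + ((1 + w + δ) ^ 2)⁻¹ * d + ((1 + w + δ) ^ 2)⁻¹ * d ^ 2 := by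
        have h2 : (1 + w + δ)⁻¹ + ((1 + w + δ) ^ 2)⁻¹ * d + ((1 + w + δ) ^ 2)⁻¹ * d ^ 2
            = (1 + w + δ + d + d ^ 2) / ((1 + w + δ) ^ 2) := by field_simp
        rw [h2, inv_eq_one_div, div_le_div_iff₀ hr hq2]
        nlinarith [sq_nonneg d]
      linarith
    · push_neg at hd
      rw [dsPhi_of_nonpos (by linarith : w + δ - d ≤ 0)]
      have hone : (1 + w + δ)⁻¹ + ((1 + w + δ) ^ 2)⁻¹ * (w + δ)
          + ((1 + w + δ) ^ 2)⁻¹ * (w + δ) ^ 2 = 1 := by field_simp; ring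
      have hAn : (0:ℝ) ≤ ((1 + w + δ) ^ 2)⁻¹ := by positivity
      have hmd : ((1 + w + δ) ^ 2)⁻¹ * (w + δ) + ((1 + w + δ) ^ 2)⁻¹ * (w + δ) ^ 2
          ≤ ((1 + w + δ) ^ 2)⁻¹ * d + ((1 + w + δ) ^ 2)⁻¹ * d ^ 2 := by
        have h3 : (0:ℝ) ≤ ((1 + w + δ) ^ 2)⁻¹ * ((d - (w + δ)) * (1 + d + (w + δ))) := by
          have : (0:ℝ) ≤ (d - (w + δ)) * (1 + d + (w + δ)) := by nlinarith
          positivity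
        nlinarith [h3]
      linarith
  · rw [if_neg hw, dsPhi_of_nonpos (by linarith : w ≤ 0)]
    have := dsPhi_le_one (w + δ - d)
    linarith

lemma dsA_le (w δ : ℝ) (hδ : 0 ≤ δ) : dsA w δ * δ ≤ 1 := by
  unfold dsA
  split
  · next hw =>
    rw [inv_mul_le_iff₀ (by positivity)]
    nlinarith
  · simp

lemma dsA_l_bound {σ w ℓ : ℝ} (hσ : σ ≠ 0) (hℓ : 0 < ℓ) :
    |dsA w (σ ^ 2 * ℓ ^ 2) * ℓ| ≤ (2 * |σ|)⁻¹ := by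
  have hσ' : 0 < |σ| := abs_pos.2 hσ
  rw [abs_of_nonneg (mul_nonneg (dsA_nonneg _ _) hℓ.le)]
  unfold dsA
  split
  · next hw =>
    have hq : (0:ℝ) < (1 + w + σ ^ 2 * ℓ ^ 2) ^ 2 := by positivity
    have hb : (0:ℝ) < 2 * |σ| := by positivity
    have h1 : 2 * |σ| * ℓ ≤ 1 + σ ^ 2 * ℓ ^ 2 := by
      nlinarith [sq_nonneg (|σ| * ℓ - 1), sq_abs σ]
    have key : ℓ * (2 * |σ|) ≤ (1 + w + σ ^ 2 * ℓ ^ 2) ^ 2 := by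
      nlinarith [mul_nonneg (by positivity : (0:ℝ) ≤ 1 + w + σ ^ 2 * ℓ ^ 2)
        (by positivity : (0:ℝ) ≤ w + σ ^ 2 * ℓ ^ 2)]
    have heq : ((1 + w + σ ^ 2 * ℓ ^ 2) ^ 2)⁻¹ * ℓ = ℓ / (1 + w + σ ^ 2 * ℓ ^ 2) ^ 2 := by
      rw [div_eq_mul_inv, mul_comm]
    rw [heq, inv_eq_one_div, div_le_div_iff₀ hq hb]
    linarith
  · simp

lemma dsA_l2_bound {σ w ℓ : ℝ} (hσ : σ ≠ 0) (hℓ : 0 < ℓ) :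
    |dsA w (σ ^ 2 * ℓ ^ 2) * ℓ ^ 2| ≤ (4 * σ ^ 2)⁻¹ := by
  have hσ2 : 0 < σ ^ 2 := by positivity
  have hσ' : 0 < |σ| := abs_pos.2 hσ
  rw [abs_of_nonneg (mul_nonneg (dsA_nonneg _ _) (sq_nonneg _))]
  unfold dsA
  split
  · next hw =>
    have hq : (0:ℝ) < (1 + w + σ ^ 2 * ℓ ^ 2) ^ 2 := by positivity
    have hb : (0:ℝ) < 4 * σ ^ 2 := by positivity
    have h1 : 2 * |σ| * ℓ ≤ 1 + σ ^ 2 * ℓ ^ 2 := by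
      nlinarith [sq_nonneg (|σ| * ℓ - 1), sq_abs σ]
    have h2 : (2 * |σ| * ℓ) ^ 2 ≤ (1 + σ ^ 2 * ℓ ^ 2) ^ 2 := by
      nlinarith [mul_pos (mul_pos two_pos hσ') hℓ]
    have h3 : (2 * |σ| * ℓ) ^ 2 = 4 * σ ^ 2 * ℓ ^ 2 := by
      rw [mul_pow, mul_pow, sq_abs]; ring
    have h4 : (1 + σ ^ 2 * ℓ ^ 2) ^ 2 ≤ (1 + w + σ ^ 2 * ℓ ^ 2) ^ 2 := by
      nlinarith [mul_nonneg hw (by positivity : (0:ℝ) ≤ 2 + 2 * (σ ^ 2 * ℓ ^ 2) + w)]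
    have key : ℓ ^ 2 * (4 * σ ^ 2) ≤ (1 + w + σ ^ 2 * ℓ ^ 2) ^ 2 := by nlinarith
    have heq : ((1 + w + σ ^ 2 * ℓ ^ 2) ^ 2)⁻¹ * ℓ ^ 2
        = ℓ ^ 2 / (1 + w + σ ^ 2 * ℓ ^ 2) ^ 2 := by rw [div_eq_mul_inv, mul_comm]
    rw [heq, inv_eq_one_div, div_le_div_iff₀ hq hb]
    linarith
  · simp; positivity

lemma ds_condexp_step {Ω : Type*} {m mΩ : MeasurableSpace Ω} (hm : m ≤ mΩ) {P : Measure Ω}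
    [IsProbabilityMeasure P] {Y ℓ w : Ω → ℝ} {σ : ℝ} (hσ : σ ≠ 0)
    (hY : MemLp Y 2 P)
    (hYmean : P[Y|m] =ᵐ[P] 0)
    (hYvar : ∀ᵐ ω ∂P, (P[fun ω' => Y ω' ^ 2|m]) ω ≤ σ ^ 2)
    (hℓ : StronglyMeasurable[m] ℓ) (hℓpos : ∀ ω, 0 < ℓ ω)
    (hw : StronglyMeasurable[m] w) :
    P[fun ω => dsPhi (w ω + σ ^ 2 * ℓ ω ^ 2 - ℓ ω * Y ω)|m]
      ≤ᵐ[P] fun ω => dsPhi (w ω) := by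
  have hwm : Measurable[m] w := hw.measurable
  have hℓm : Measurable[m] ℓ := hℓ.measurable
  set A : Ω → ℝ := fun ω => dsA (w ω) (σ ^ 2 * ℓ ω ^ 2) with hAdef
  have hAm : Measurable[m] A := by
    rw [hAdef]
    unfold dsA
    exact Measurable.ite (measurableSet_le measurable_const hwm)
      (((((measurable_const.add hwm).add ((hℓm.pow_const 2).const_mul _)).pow_const 2)).inv)
      measurable_const
  have hA0 : ∀ ω, 0 ≤ A ω := fun ω => dsA_nonneg _ _
  have hAl : ∀ ω, |A ω * ℓ ω| ≤ (2 * |σ|)⁻¹ := fun ω => dsA_l_bound hσ (hℓpos ω)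
  have hAl2 : ∀ ω, |A ω * ℓ ω ^ 2| ≤ (4 * σ ^ 2)⁻¹ := fun ω => dsA_l2_bound hσ (hℓpos ω)
  have hAδ : ∀ ω, A ω * (σ ^ 2 * ℓ ω ^ 2) ≤ 1 := fun ω => dsA_le _ _ (by positivity)
  set K : Ω → ℝ := fun ω => dsPhi (w ω) - A ω * (σ ^ 2 * ℓ ω ^ 2) with hKdef
  have hKval : ∀ ω, K ω = dsPhi (w ω) - A ω * (σ ^ 2 * ℓ ω ^ 2) := fun _ => rfl
  have hKm : Measurable[m] K := by
    rw [hKdef]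
    exact (dsPhi_continuous.measurable.comp hwm).sub
      (hAm.mul ((hℓm.pow_const 2).const_mul _))
  have hYint : Integrable Y P := hY.integrable one_le_two
  have hY2int : Integrable (fun ω => Y ω ^ 2) P := hY.integrable_sq
  have hKint : Integrable K P := by
    refine Integrable.mono' (integrable_const 2) ((hKm.mono hm le_rfl).aestronglyMeasurable)
      (ae_of_all _ fun ω => ?_)
    rw [Real.norm_eq_abs]
    have h1 : 0 ≤ A ω * (σ ^ 2 * ℓ ω ^ 2) := mul_nonneg (hA0 ω) (by positivity)
    have h2 := dsPhi_nonneg (w ω)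
    have h3 := dsPhi_le_one (w ω)
    rw [hKval, abs_le]
    exact ⟨by linarith [hAδ ω], by linarith [hAδ ω]⟩
  have hg1 : Integrable (fun ω => (A ω * ℓ ω) * Y ω) P := by
    refine hYint.bdd_mul (c := (2 * |σ|)⁻¹)
      (((hAm.mul hℓm).mono hm le_rfl).aestronglyMeasurable) (ae_of_all _ fun ω => ?_)
    rw [Real.norm_eq_abs]; exact hAl ω
  have hg2 : Integrable (fun ω => (A ω * ℓ ω ^ 2) * Y ω ^ 2) P := by
    refine hY2int.bdd_mul (c := (4 * σ ^ 2)⁻¹)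
      (((hAm.mul (hℓm.pow_const 2)).mono hm le_rfl).aestronglyMeasurable)
      (ae_of_all _ fun ω => ?_)
    rw [Real.norm_eq_abs]; exact hAl2 ω
  have hf1int : Integrable (fun ω => dsPhi (w ω + σ ^ 2 * ℓ ω ^ 2 - ℓ ω * Y ω)) P := by
    have haesm : AEStronglyMeasurable (fun ω => w ω + σ ^ 2 * ℓ ω ^ 2 - ℓ ω * Y ω) P := by
      refine AEStronglyMeasurable.sub ?_ ?_
      · exact ((hwm.mono hm le_rfl).add
          (((hℓm.pow_const 2).const_mul _).mono hm le_rfl)).aestronglyMeasurable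
      · exact ((hℓm.mono hm le_rfl).aestronglyMeasurable.mul hY.1)
    refine Integrable.mono' (integrable_const 1)
      (dsPhi_continuous.comp_aestronglyMeasurable haesm) (ae_of_all _ fun ω => ?_)
    rw [Real.norm_eq_abs, abs_of_nonneg (dsPhi_nonneg _)]
    exact dsPhi_le_one _
  have hle : ∀ ω, dsPhi (w ω + σ ^ 2 * ℓ ω ^ 2 - ℓ ω * Y ω)
      ≤ K ω + (A ω * ℓ ω) * Y ω + (A ω * ℓ ω ^ 2) * Y ω ^ 2 := by
    intro ω
    have h := dsPhi_step (w ω) (σ ^ 2 * ℓ ω ^ 2) (ℓ ω * Y ω) (by positivity)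
    calc dsPhi (w ω + σ ^ 2 * ℓ ω ^ 2 - ℓ ω * Y ω)
        ≤ (dsPhi (w ω) - A ω * (σ ^ 2 * ℓ ω ^ 2)) + A ω * (ℓ ω * Y ω)
          + A ω * (ℓ ω * Y ω) ^ 2 := h
      _ = K ω + (A ω * ℓ ω) * Y ω + (A ω * ℓ ω ^ 2) * Y ω ^ 2 := by rw [hKval]; ring
  have hsum : Integrable ((fun ω => K ω + (A ω * ℓ ω) * Y ω)
      + fun ω => (A ω * ℓ ω ^ 2) * Y ω ^ 2) P := (hKint.add hg1).add hg2
  have step1 : P[fun ω => dsPhi (w ω + σ ^ 2 * ℓ ω ^ 2 - ℓ ω * Y ω)|m]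
      ≤ᵐ[P] P[(fun ω => K ω + (A ω * ℓ ω) * Y ω) + fun ω => (A ω * ℓ ω ^ 2) * Y ω ^ 2|m] :=
    condExp_mono hf1int hsum (ae_of_all _ hle)
  have split1 : P[(fun ω => K ω + (A ω * ℓ ω) * Y ω) + fun ω => (A ω * ℓ ω ^ 2) * Y ω ^ 2|m]
      =ᵐ[P] P[fun ω => K ω + (A ω * ℓ ω) * Y ω|m] + P[fun ω => (A ω * ℓ ω ^ 2) * Y ω ^ 2|m] :=
    condExp_add (hKint.add hg1) hg2 m
  have split2 : P[fun ω => K ω + (A ω * ℓ ω) * Y ω|m]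
      =ᵐ[P] P[K|m] + P[fun ω => (A ω * ℓ ω) * Y ω|m] := condExp_add hKint hg1 m
  have hK : P[K|m] =ᵐ[P] K := by
    rw [condExp_of_stronglyMeasurable hm (hKm.stronglyMeasurable) hKint]
  have hmul1 : P[fun ω => (A ω * ℓ ω) * Y ω|m]
      =ᵐ[P] (fun ω => A ω * ℓ ω) * P[Y|m] :=
    condExp_mul_of_stronglyMeasurable_left ((hAm.mul hℓm).stronglyMeasurable) hg1 hYint
  have hmul2 : P[fun ω => (A ω * ℓ ω ^ 2) * Y ω ^ 2|m]
      =ᵐ[P] (fun ω => A ω * ℓ ω ^ 2) * P[fun ω => Y ω ^ 2|m] :=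
    condExp_mul_of_stronglyMeasurable_left ((hAm.mul (hℓm.pow_const 2)).stronglyMeasurable) hg2 hY2int
  filter_upwards [step1, split1, split2, hK, hmul1, hmul2, hYmean, hYvar] with ω h1 h2 h3 h4
    h5 h6 h7 h8
  simp only [Pi.add_apply, Pi.mul_apply, Pi.zero_apply] at h1 h2 h3 h5 h6 h7
  have hA2 : 0 ≤ A ω * ℓ ω ^ 2 := mul_nonneg (hA0 ω) (sq_nonneg _)
  have h9 := mul_le_mul_of_nonneg_left h8 hA2
  have hfin : K ω + A ω * ℓ ω ^ 2 * σ ^ 2 = dsPhi (w ω) := by rw [hKval]; ring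
  calc (P[fun ω => dsPhi (w ω + σ ^ 2 * ℓ ω ^ 2 - ℓ ω * Y ω)|m]) ω
      ≤ (P[fun ω => K ω + A ω * ℓ ω * Y ω|m]) ω
        + (P[fun ω => A ω * ℓ ω ^ 2 * Y ω ^ 2|m]) ω := by rw [← h2]; exact h1
    _ = K ω + A ω * ℓ ω * (P[Y|m]) ω + A ω * ℓ ω ^ 2 * (P[fun ω => Y ω ^ 2|m]) ω := by
        rw [h3, h4, h5, h6]
    _ ≤ dsPhi (w ω) := by rw [h7]; linarith

/-- **Dubins–Savage confidence sequence.** Under a constant conditional mean `μ` and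
conditional variance bound `σ²`, with positive predictable coefficients `l`, the
intervals `CI_t^{DS}` form a `(1-α)`-confidence sequence for `μ`. -/
theorem dubins_savage_confidence_sequence
    {Ω : Type*} {mΩ : MeasurableSpace Ω} {P : Measure Ω} [IsProbabilityMeasure P]
    (ℱ : Filtration ℕ mΩ) (X l : ℕ → Ω → ℝ) (μ σ α : ℝ)
    (hα : α ∈ Set.Ioo (0 : ℝ) 1)
    (hX_adapted : StronglyAdapted ℱ X)
    (hX_sq : ∀ t, 1 ≤ t → MemLp (X t) 2 P)
    (hmean : ∀ t, 1 ≤ t → P[X t | ℱ (t - 1)] =ᵐ[P] fun _ => μ)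
    (hvar : ∀ t, 1 ≤ t →
      ∀ᵐ ω ∂P, (P[fun ω' => (X t ω' - μ) ^ 2 | ℱ (t - 1)]) ω ≤ σ ^ 2)
    (hl_pred : ∀ t, 1 ≤ t → StronglyMeasurable[ℱ (t - 1)] (l t))
    (hl_pos : ∀ t ω, 1 ≤ t → 0 < l t ω) :
    ENNReal.ofReal (1 - α) ≤
      P {ω | ∀ t : ℕ, 1 ≤ t →
        μ ∈ Set.Icc
          ((∑ i ∈ Finset.Icc 1 t, l i ω * X i ω -
              (2 / α - 1 + σ ^ 2 * ∑ i ∈ Finset.Icc 1 t, (l i ω) ^ 2)) /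
            ∑ i ∈ Finset.Icc 1 t, l i ω)
          ((∑ i ∈ Finset.Icc 1 t, l i ω * X i ω +
              (2 / α - 1 + σ ^ 2 * ∑ i ∈ Finset.Icc 1 t, (l i ω) ^ 2)) /
            ∑ i ∈ Finset.Icc 1 t, l i ω)} := by
  obtain ⟨hα0, hα1⟩ := hα
  have hc1 : (1:ℝ) < 2 / α - 1 := by
    have : (2:ℝ) < 2 / α := by rw [lt_div_iff₀ hα0]; nlinarith
    linarith
  -- generic membership criterion
  have hmem : ∀ (t : ℕ) (ω : Ω), 1 ≤ t →
      |∑ i ∈ Finset.Icc 1 t, l i ω * (X i ω - μ)|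
        ≤ 2 / α - 1 + σ ^ 2 * ∑ i ∈ Finset.Icc 1 t, (l i ω) ^ 2 →
      μ ∈ Set.Icc
          ((∑ i ∈ Finset.Icc 1 t, l i ω * X i ω -
              (2 / α - 1 + σ ^ 2 * ∑ i ∈ Finset.Icc 1 t, (l i ω) ^ 2)) /
            ∑ i ∈ Finset.Icc 1 t, l i ω)
          ((∑ i ∈ Finset.Icc 1 t, l i ω * X i ω +
              (2 / α - 1 + σ ^ 2 * ∑ i ∈ Finset.Icc 1 t, (l i ω) ^ 2)) /
            ∑ i ∈ Finset.Icc 1 t, l i ω) := by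
    intro t ω ht habs
    have hL : 0 < ∑ i ∈ Finset.Icc 1 t, l i ω :=
      Finset.sum_pos (fun i hi => hl_pos i ω (Finset.mem_Icc.1 hi).1)
        ⟨1, Finset.mem_Icc.2 ⟨le_refl 1, ht⟩⟩
    have hSexp : ∑ i ∈ Finset.Icc 1 t, l i ω * (X i ω - μ)
        = (∑ i ∈ Finset.Icc 1 t, l i ω * X i ω) - μ * ∑ i ∈ Finset.Icc 1 t, l i ω := by
      rw [Finset.mul_sum, ← Finset.sum_sub_distrib]
      exact Finset.sum_congr rfl fun i _ => by ring
    rw [hSexp] at habs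
    obtain ⟨hlo, hhi⟩ := abs_le.1 habs
    constructor
    · rw [div_le_iff₀ hL]; linarith
    · rw [le_div_iff₀ hL]; linarith
  by_cases hσ0 : σ = 0
  · -- degenerate case: X t = μ a.s.
    have hXμ : ∀ t, 1 ≤ t → ∀ᵐ ω ∂P, X t ω = μ := by
      intro t ht
      have hint : Integrable (fun ω => (X t ω - μ) ^ 2) P :=
        ((hX_sq t ht).sub (memLp_const μ)).integrable_sq
      have hn : 0 ≤ᵐ[P] P[fun ω' => (X t ω' - μ) ^ 2|ℱ (t - 1)] :=
        condExp_nonneg (ae_of_all _ fun ω => sq_nonneg _)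
      have h0 : P[fun ω' => (X t ω' - μ) ^ 2|ℱ (t - 1)] =ᵐ[P] 0 := by
        filter_upwards [hn, hvar t ht] with ω h1 h2
        simp only [Pi.zero_apply] at h1 ⊢
        rw [hσ0] at h2
        norm_num at h2
        linarith
      have hI : ∫ ω, (X t ω - μ) ^ 2 ∂P = 0 := by
        rw [← integral_condExp (ℱ.le (t - 1))]
        rw [integral_congr_ae h0]; simp
      have := (integral_eq_zero_iff_of_nonneg_ae (ae_of_all _ fun ω => sq_nonneg (X t ω - μ))
        hint).1 hI
      filter_upwards [this] with ω hω
      have : (X t ω - μ) ^ 2 = 0 := hω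
      have := pow_eq_zero_iff (n := 2) (by norm_num) |>.1 this
      linarith [sub_eq_zero.1 this]
    have hall : ∀ᵐ ω ∂P, ∀ t : ℕ, 1 ≤ t → X t ω = μ := by
      rw [ae_all_iff]
      intro t
      by_cases ht : 1 ≤ t
      · filter_upwards [hXμ t ht] with ω hω _; exact hω
      · exact ae_of_all _ fun ω h => absurd h ht
    calc ENNReal.ofReal (1 - α) ≤ 1 := by
          rw [ENNReal.ofReal_le_one]; linarith
      _ = P Set.univ := measure_univ.symm
      _ ≤ _ := by
          refine measure_mono_ae ?_
          filter_upwards [hall] with ω hω _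
          intro t ht
          refine hmem t ω ht ?_
          have hz : ∑ i ∈ Finset.Icc 1 t, l i ω * (X i ω - μ) = 0 := by
            refine Finset.sum_eq_zero fun i hi => ?_
            rw [hω i (Finset.mem_Icc.1 hi).1]; ring
          rw [hz, abs_zero]
          have : 0 ≤ σ ^ 2 * ∑ i ∈ Finset.Icc 1 t, (l i ω) ^ 2 := by positivity
          linarith
  · -- main case
    set c : ℝ := 2 / α - 1 with hcdef
    set S : ℕ → Ω → ℝ := fun t ω => ∑ i ∈ Finset.Icc 1 t, l i ω * (X i ω - μ) with hSdef
    set V : ℕ → Ω → ℝ := fun t ω => σ ^ 2 * ∑ i ∈ Finset.Icc 1 t, (l i ω) ^ 2 with hVdef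
    set M : ℕ → Ω → ℝ :=
      fun t ω => dsPhi (c + V t ω - S t ω) + dsPhi (c + V t ω + S t ω) with hMdef
    have hSval : ∀ t ω, S t ω = ∑ i ∈ Finset.Icc 1 t, l i ω * (X i ω - μ) := fun _ _ => rfl
    have hVval : ∀ t ω, V t ω = σ ^ 2 * ∑ i ∈ Finset.Icc 1 t, (l i ω) ^ 2 := fun _ _ => rfl
    have hMval : ∀ t ω, M t ω = dsPhi (c + V t ω - S t ω) + dsPhi (c + V t ω + S t ω) :=
      fun _ _ => rfl
    have hlm : ∀ i t, 1 ≤ i → i ≤ t → Measurable[ℱ t] (l i) := by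
      intro i t hi hit
      exact ((hl_pred i hi).measurable).mono (ℱ.mono (by omega)) le_rfl
    have hXm : ∀ i t, i ≤ t → Measurable[ℱ t] (X i) := by
      intro i t hit
      exact (hX_adapted i).measurable.mono (ℱ.mono hit) le_rfl
    have hS_meas : ∀ t, Measurable[ℱ t] (S t) := by
      intro t
      apply Finset.measurable_sum
      intro i hi
      obtain ⟨hi1, hi2⟩ := Finset.mem_Icc.1 hi
      exact (hlm i t hi1 hi2).mul ((hXm i t hi2).sub measurable_const)
    have hV_meas : ∀ t, Measurable[ℱ t] (V t) := by
      intro t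
      apply Measurable.const_mul
      apply Finset.measurable_sum
      intro i hi
      obtain ⟨hi1, hi2⟩ := Finset.mem_Icc.1 hi
      exact (hlm i t hi1 hi2).pow_const 2
    have hM_meas : ∀ t, Measurable[ℱ t] (M t) := by
      intro t
      have harg1 : Measurable[ℱ t] (fun ω => c + V t ω - S t ω) :=
        (measurable_const.add (hV_meas t)).sub (hS_meas t)
      have harg2 : Measurable[ℱ t] (fun ω => c + V t ω + S t ω) :=
        (measurable_const.add (hV_meas t)).add (hS_meas t)
      exact (dsPhi_continuous.measurable.comp harg1).add
        (dsPhi_continuous.measurable.comp harg2)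
    have hM_adapted : StronglyAdapted ℱ M := fun t => (hM_meas t).stronglyMeasurable
    have hM_nonneg : ∀ t ω, 0 ≤ M t ω := fun t ω =>
      add_nonneg (dsPhi_nonneg _) (dsPhi_nonneg _)
    have hM_le_two : ∀ t ω, M t ω ≤ 2 := fun t ω => by
      have := dsPhi_le_one (c + V t ω - S t ω)
      have := dsPhi_le_one (c + V t ω + S t ω)
      rw [hMval]; linarith
    have hM_int : ∀ t, Integrable (M t) P := by
      intro t
      refine Integrable.mono' (integrable_const 2)
        (((hM_meas t).mono (ℱ.le t) le_rfl).aestronglyMeasurable) (ae_of_all _ fun ω => ?_)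
      rw [Real.norm_eq_abs, abs_of_nonneg (hM_nonneg t ω)]
      exact hM_le_two t ω
    -- one-step supermartingale property
    have hsuper : Supermartingale M ℱ P := by
      refine supermartingale_nat hM_adapted hM_int fun t => ?_
      have ht1 : 1 ≤ t + 1 := Nat.le_add_left 1 t
      have hidx : t + 1 - 1 = t := by omega
      have hXint : Integrable (X (t + 1)) P := (hX_sq (t + 1) ht1).integrable one_le_two
      have hℓsm : StronglyMeasurable[ℱ t] (l (t + 1)) := by
        have := hl_pred (t + 1) ht1; rwa [hidx] at this
      have hℓpos' : ∀ ω, 0 < l (t + 1) ω := fun ω => hl_pos (t + 1) ω ht1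
      -- the positive-sign increment
      have hYp : MemLp (fun ω => X (t + 1) ω - μ) 2 P := (hX_sq (t + 1) ht1).sub (memLp_const μ)
      have hYpmean : P[fun ω => X (t + 1) ω - μ|ℱ t] =ᵐ[P] 0 := by
        have h1 : P[fun ω => X (t + 1) ω - μ|ℱ t]
            =ᵐ[P] P[X (t + 1)|ℱ t] - P[fun _ => μ|ℱ t] := condExp_sub hXint (integrable_const μ) _
        have h2 := hmean (t + 1) ht1; rw [hidx] at h2
        filter_upwards [h1, h2] with ω e1 e2
        rw [Pi.zero_apply, e1, Pi.sub_apply, e2, condExp_const (ℱ.le t)]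
        simp
      have hYpvar : ∀ᵐ ω ∂P, (P[fun ω' => (X (t + 1) ω' - μ) ^ 2|ℱ t]) ω ≤ σ ^ 2 := by
        have := hvar (t + 1) ht1; rwa [hidx] at this
      -- the negative-sign increment
      have hYn : MemLp (fun ω => μ - X (t + 1) ω) 2 P := (memLp_const μ).sub (hX_sq (t + 1) ht1)
      have hYnmean : P[fun ω => μ - X (t + 1) ω|ℱ t] =ᵐ[P] 0 := by
        have h1 : P[fun ω => μ - X (t + 1) ω|ℱ t]
            =ᵐ[P] P[fun _ => μ|ℱ t] - P[X (t + 1)|ℱ t] := condExp_sub (integrable_const μ) hXint _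
        have h2 := hmean (t + 1) ht1; rw [hidx] at h2
        filter_upwards [h1, h2] with ω e1 e2
        rw [Pi.zero_apply, e1, Pi.sub_apply, e2, condExp_const (ℱ.le t)]
        simp
      have hYnvar : ∀ᵐ ω ∂P, (P[fun ω' => (μ - X (t + 1) ω') ^ 2|ℱ t]) ω ≤ σ ^ 2 := by
        have heq : (fun ω' => (μ - X (t + 1) ω') ^ 2) = fun ω' => (X (t + 1) ω' - μ) ^ 2 := by
          funext ω'; ring
        rw [heq]
        have := hvar (t + 1) ht1; rwa [hidx] at this
      have hwp : StronglyMeasurable[ℱ t] (fun ω => c + V t ω - S t ω) :=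
        ((measurable_const.add (hV_meas t)).sub (hS_meas t)).stronglyMeasurable
      have hwn : StronglyMeasurable[ℱ t] (fun ω => c + V t ω + S t ω) :=
        ((measurable_const.add (hV_meas t)).add (hS_meas t)).stronglyMeasurable
      have hstepp := ds_condexp_step (ℱ.le t) hσ0 hYp hYpmean hYpvar hℓsm hℓpos' hwp
      have hstepn := ds_condexp_step (ℱ.le t) hσ0 hYn hYnmean hYnvar hℓsm hℓpos' hwn
      -- rewrite the arguments at time t+1
      have hVsucc : ∀ ω, V (t + 1) ω = V t ω + σ ^ 2 * l (t + 1) ω ^ 2 := by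
        intro ω
        rw [hVval, hVval, ← Finset.insert_Icc_right_eq_Icc_add_one ht1, Finset.sum_insert (by simp)]
        ring
      have hSsucc : ∀ ω, S (t + 1) ω = S t ω + l (t + 1) ω * (X (t + 1) ω - μ) := by
        intro ω
        rw [hSval, hSval, ← Finset.insert_Icc_right_eq_Icc_add_one ht1, Finset.sum_insert (by simp)]
        ring
      have hargp : (fun ω => dsPhi (c + V (t + 1) ω - S (t + 1) ω))
          = fun ω => dsPhi ((c + V t ω - S t ω) + σ ^ 2 * l (t + 1) ω ^ 2
            - l (t + 1) ω * (X (t + 1) ω - μ)) := by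
        funext ω; rw [hVsucc, hSsucc]; congr 1; ring
      have hargn : (fun ω => dsPhi (c + V (t + 1) ω + S (t + 1) ω))
          = fun ω => dsPhi ((c + V t ω + S t ω) + σ ^ 2 * l (t + 1) ω ^ 2
            - l (t + 1) ω * (μ - X (t + 1) ω)) := by
        funext ω; rw [hVsucc, hSsucc]; congr 1; ring
      -- integrability of each dsPhi term at time t+1
      have hphi_int : ∀ f : Ω → ℝ, AEStronglyMeasurable f P →
          Integrable (fun ω => dsPhi (f ω)) P := by
        intro f hf
        refine Integrable.mono' (integrable_const 1)
          (dsPhi_continuous.comp_aestronglyMeasurable hf) (ae_of_all _ fun ω => ?_)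
        rw [Real.norm_eq_abs, abs_of_nonneg (dsPhi_nonneg _)]
        exact dsPhi_le_one _
      have hV1m : Measurable (V (t + 1)) := (hV_meas (t + 1)).mono (ℱ.le (t + 1)) le_rfl
      have hS1m : Measurable (S (t + 1)) := (hS_meas (t + 1)).mono (ℱ.le (t + 1)) le_rfl
      have hintp : Integrable (fun ω => dsPhi (c + V (t + 1) ω - S (t + 1) ω)) P :=
        hphi_int _ ((measurable_const.add hV1m).sub hS1m).aestronglyMeasurable
      have hintn : Integrable (fun ω => dsPhi (c + V (t + 1) ω + S (t + 1) ω)) P :=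
        hphi_int _ ((measurable_const.add hV1m).add hS1m).aestronglyMeasurable
      have hadd : P[M (t + 1)|ℱ t]
          =ᵐ[P] P[fun ω => dsPhi (c + V (t + 1) ω - S (t + 1) ω)|ℱ t]
            + P[fun ω => dsPhi (c + V (t + 1) ω + S (t + 1) ω)|ℱ t] :=
        condExp_add hintp hintn _
      rw [hargp] at hadd
      rw [hargn] at hadd
      filter_upwards [hadd, hstepp, hstepn] with ω e1 e2 e3
      rw [hMval t ω]
      calc (P[M (t + 1)|ℱ t]) ω
          = (P[fun ω => dsPhi (c + V t ω - S t ω + σ ^ 2 * l (t + 1) ω ^ 2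
              - l (t + 1) ω * (X (t + 1) ω - μ))|ℱ t]) ω
            + (P[fun ω => dsPhi (c + V t ω + S t ω + σ ^ 2 * l (t + 1) ω ^ 2
              - l (t + 1) ω * (μ - X (t + 1) ω))|ℱ t]) ω := by
            rw [e1]; rfl
        _ ≤ dsPhi (c + V t ω - S t ω) + dsPhi (c + V t ω + S t ω) := add_le_add e2 e3
    -- value at time 0
    have hM0 : M 0 = fun _ => α := by
      funext ω
      have he : Finset.Icc 1 0 = (∅ : Finset ℕ) := by simp
      have h1 : V 0 ω = 0 := by rw [hVval, he, Finset.sum_empty, mul_zero]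
      have h2 : S 0 ω = 0 := by rw [hSval, he, Finset.sum_empty]
      have hcpos : (0:ℝ) ≤ c := by linarith
      have h3 : (1:ℝ) + c = 2 / α := by rw [hcdef]; ring
      rw [hMval, h1, h2]
      rw [show c + 0 - 0 = c by ring, show c + 0 + 0 = c by ring]
      rw [dsPhi_of_nonneg hcpos, h3, inv_div]
      ring
    -- Ville's inequality via optional stopping
    set E : ℕ → Set Ω := fun n => ⋃ k ∈ Finset.range (n + 1), {ω | 1 ≤ M k ω} with hEdef
    have hE_meas : ∀ n, MeasurableSet (E n) := by
      intro n
      refine Finset.measurableSet_biUnion _ fun k _ => ?_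
      exact measurableSet_le measurable_const ((hM_meas k).mono (ℱ.le k) le_rfl)
    have hEn_bound : ∀ n, P (E n) ≤ ENNReal.ofReal α := by
      intro n
      set τ : Ω → WithTop ℕ := fun ω => ((hittingBtwn M (Set.Ici (1:ℝ)) 0 n ω : ℕ) : WithTop ℕ) with hτdef
      have hτ : IsStoppingTime ℱ τ := Adapted.isStoppingTime_hittingBtwn hM_adapted.adapted measurableSet_Ici
      have hτ_le : ∀ ω, τ ω ≤ n := fun ω => WithTop.coe_le_coe.2 (hittingBtwn_le ω)
      have hsubneg : Submartingale (-M) ℱ P := hsuper.neg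
      have hsv_eq : stoppedValue (-M) τ = -(stoppedValue M τ) := rfl
      have hsv_int : Integrable (stoppedValue M τ) P := by
        have h := (hsubneg.integrable_stoppedValue hτ hτ_le).neg
        rw [hsv_eq] at h
        simpa using h
      have hsv0_eq : stoppedValue (-M) (fun _ => ((0:ℕ) : ℕ∞)) = -(M 0) := rfl
      have hmono := hsubneg.expected_stoppedValue_mono (isStoppingTime_const ℱ 0) hτ
        (fun ω => WithTop.coe_le_coe.2 (Nat.zero_le _)) hτ_le
      rw [hsv_eq, stoppedValue_const, Pi.neg_apply M 0, integral_neg', integral_neg', neg_le_neg_iff] at hmono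
      have hsv0 : stoppedValue M (fun _ => 0) = M 0 := rfl
      have hEM0 : ∫ ω, M 0 ω ∂P = α := by
        rw [hM0, integral_const]; simp
      have hIub : ∫ ω, stoppedValue M τ ω ∂P ≤ α := by
        rw [← hEM0]
        exact hmono
      have hind : ∀ ω, (E n).indicator (fun _ => (1:ℝ)) ω ≤ stoppedValue M τ ω := by
        intro ω
        by_cases hω : ω ∈ E n
        · rw [Set.indicator_of_mem hω]
          have hexists : ∃ j ∈ Set.Icc 0 n, M j ω ∈ Set.Ici (1:ℝ) := by
            simp only [hEdef, Set.mem_iUnion, Finset.mem_range, Set.mem_setOf_eq,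
              exists_prop] at hω
            obtain ⟨k, hk, hk1⟩ := hω
            exact ⟨k, Set.mem_Icc.mpr ⟨Nat.zero_le _, Nat.lt_succ_iff.1 hk⟩, hk1⟩
          exact stoppedValue_hittingBtwn_mem hexists
        · rw [Set.indicator_of_notMem hω]
          exact hM_nonneg _ ω
      have hPn : (P (E n)).toReal ≤ α := by
        have h1 : ∫ ω, (E n).indicator (fun _ => (1:ℝ)) ω ∂P = (P (E n)).toReal := by
          rw [integral_indicator_const (1:ℝ) (hE_meas n)]; simp [measureReal_def]
        have h2 : ∫ ω, (E n).indicator (fun _ => (1:ℝ)) ω ∂P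
            ≤ ∫ ω, stoppedValue M τ ω ∂P :=
          integral_mono ((integrable_const (1:ℝ)).indicator (hE_meas n)) hsv_int hind
        linarith
      exact (ENNReal.le_ofReal_iff_toReal_le (measure_ne_top P _) hα0.le).2 hPn
    have hEmono : Monotone E := by
      intro a b hab ω hωa
      simp only [hEdef, Set.mem_iUnion, Finset.mem_range, exists_prop] at *
      obtain ⟨k, hk, h1⟩ := hωa
      exact ⟨k, by omega, h1⟩
    have hPE : P (⋃ n, E n) ≤ ENNReal.ofReal α := by
      rw [hEmono.directed_le.measure_iUnion]
      exact iSup_le hEn_bound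
    have hsub_good : (⋃ n, E n)ᶜ ⊆ {ω | ∀ t : ℕ, 1 ≤ t →
        μ ∈ Set.Icc
          ((∑ i ∈ Finset.Icc 1 t, l i ω * X i ω -
              (2 / α - 1 + σ ^ 2 * ∑ i ∈ Finset.Icc 1 t, (l i ω) ^ 2)) /
            ∑ i ∈ Finset.Icc 1 t, l i ω)
          ((∑ i ∈ Finset.Icc 1 t, l i ω * X i ω +
              (2 / α - 1 + σ ^ 2 * ∑ i ∈ Finset.Icc 1 t, (l i ω) ^ 2)) /
            ∑ i ∈ Finset.Icc 1 t, l i ω)} := by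
      intro ω hω
      rw [Set.mem_compl_iff] at hω
      have hMlt : ∀ k, M k ω < 1 := by
        intro k
        by_contra h
        push_neg at h
        refine hω (Set.mem_iUnion.2 ⟨k, ?_⟩)
        simp only [hEdef, Set.mem_iUnion, Finset.mem_range, exists_prop, Set.mem_setOf_eq]
        exact ⟨k, Nat.lt_succ_self k, h⟩
      intro t ht
      refine hmem t ω ht ?_
      have hSb : |S t ω| ≤ c + V t ω := by
        by_contra h
        push_neg at h
        rcases lt_abs.1 h with h1 | h1
        · have harg : c + V t ω - S t ω ≤ 0 := by linarith
          have := dsPhi_of_nonpos harg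
          have h2 := dsPhi_nonneg (c + V t ω + S t ω)
          have h3 := hMlt t
          rw [hMval, this] at h3
          linarith
        · have harg : c + V t ω + S t ω ≤ 0 := by linarith
          have := dsPhi_of_nonpos harg
          have h2 := dsPhi_nonneg (c + V t ω - S t ω)
          have h3 := hMlt t
          rw [hMval, this] at h3
          linarith
      rw [hSval, hVval, hcdef] at hSb
      exact hSb
    calc ENNReal.ofReal (1 - α)
        = 1 - ENNReal.ofReal α := by
          rw [← ENNReal.ofReal_one, ← ENNReal.ofReal_sub _ hα0.le]
      _ ≤ 1 - P (⋃ n, E n) := tsub_le_tsub_left hPE 1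
      _ = P ((⋃ n, E n)ᶜ) := (prob_compl_eq_one_sub (MeasurableSet.iUnion fun n => hE_meas n)).symm
      _ ≤ _ := measure_mono hsub_good
end

section
/- Let {X_t}_{t∈ℕ⁺} be adapted to {F_t} with E[X_t | F_{t−1}] = μ and E[(X_t − μ)² | F_{t−1}] ≤ σ² almost surely for all t ∈ ℕ⁺, and let {λ_t}_{t∈ℕ⁺} be any predictable process. Then the process M_t^{SN} = Π_{i=1}^t exp( λ_i(X_i − μ) − λ_i²((X_i − μ)² + 2σ²)/6 ), with M_0^{SN} = 1, is a nonnegative supermartingale with respect to {F_t}. -/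
open MeasureTheory ProbabilityTheory Filter

private lemma sn_deriv (v : ℝ) :
    HasDerivAt (fun v : ℝ => (1 + v + v ^ 2 / 3) * Real.exp (v ^ 2 / 6 - v))
      (v ^ 3 / 9 * Real.exp (v ^ 2 / 6 - v)) v := by
  have hg : HasDerivAt (fun v : ℝ => v ^ 2 / 6 - v) (v / 3 - 1) v := by
    have := ((hasDerivAt_pow 2 v).div_const 6).sub (hasDerivAt_id v)
    exact this.congr_deriv (by push_cast; ring)
  have he : HasDerivAt (fun v : ℝ => Real.exp (v ^ 2 / 6 - v))
      (Real.exp (v ^ 2 / 6 - v) * (v / 3 - 1)) v := (Real.hasDerivAt_exp _).comp v hg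
  have hp : HasDerivAt (fun v : ℝ => 1 + v + v ^ 2 / 3) (1 + 2 * v / 3) v := by
    have := ((hasDerivAt_const v (1:ℝ)).add (hasDerivAt_id v)).add
      ((hasDerivAt_pow 2 v).div_const 3)
    exact this.congr_deriv (by push_cast; ring)
  have := hp.mul he
  exact this.congr_deriv (by ring)

private lemma sn_key (v : ℝ) : Real.exp (v - v ^ 2 / 6) ≤ 1 + v + v ^ 2 / 3 := by
  set F : ℝ → ℝ := fun v => (1 + v + v ^ 2 / 3) * Real.exp (v ^ 2 / 6 - v) with hF
  have hcont : Continuous F := by fun_prop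
  have h1 : ∀ v : ℝ, 1 ≤ F v := by
    intro v
    have hF0 : F 0 = 1 := by simp [hF]
    rcases le_total 0 v with hv | hv
    · have hmono : MonotoneOn F (Set.Ici (0:ℝ)) := by
        apply monotoneOn_of_deriv_nonneg (convex_Ici 0) hcont.continuousOn
        · intro x _
          exact (sn_deriv x).differentiableAt.differentiableWithinAt
        · intro x hx
          rw [(sn_deriv x).deriv]
          have : (0:ℝ) < x := by simpa using hx
          positivity
      calc 1 = F 0 := hF0.symm
        _ ≤ F v := hmono Set.self_mem_Ici hv hv
    · have hanti : AntitoneOn F (Set.Iic (0:ℝ)) := by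
        apply antitoneOn_of_deriv_nonpos (convex_Iic 0) hcont.continuousOn
        · intro x _
          exact (sn_deriv x).differentiableAt.differentiableWithinAt
        · intro x hx
          rw [(sn_deriv x).deriv]
          have hx0 : x < 0 := by simpa using hx
          have hx3 : x ^ 3 ≤ 0 := by nlinarith [sq_nonneg x]
          have : x ^ 3 / 9 ≤ 0 := by linarith
          exact mul_nonpos_of_nonpos_of_nonneg this (Real.exp_pos _).le
      calc 1 = F 0 := hF0.symm
        _ ≤ F v := hanti hv Set.self_mem_Iic hv
  have := mul_le_mul_of_nonneg_right (h1 v) (Real.exp_pos (v - v ^ 2 / 6)).le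
  rw [one_mul, hF] at this
  calc Real.exp (v - v ^ 2 / 6)
      ≤ (1 + v + v ^ 2 / 3) * Real.exp (v ^ 2 / 6 - v) * Real.exp (v - v ^ 2 / 6) := this
    _ = (1 + v + v ^ 2 / 3) := by
        rw [mul_assoc, ← Real.exp_add]
        norm_num

private lemma sn_sq_exp_le {c : ℝ} (hc : 0 < c) (x : ℝ) :
    x ^ 2 * Real.exp (-(c * x ^ 2)) ≤ 1 / c := by
  have h1 : c * x ^ 2 ≤ Real.exp (c * x ^ 2) := by
    linarith [Real.add_one_le_exp (c * x ^ 2)]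
  rw [Real.exp_neg, ← div_eq_mul_inv, div_le_div_iff₀ (Real.exp_pos _) hc]
  nlinarith

private lemma sn_abs_exp_le {c : ℝ} (hc : 0 < c) (x : ℝ) :
    |x| * Real.exp (-(c * x ^ 2)) ≤ 1 + 1 / c := by
  have h1 : |x| ≤ 1 + x ^ 2 := by nlinarith [sq_abs x, sq_nonneg (|x| - 1), abs_nonneg x]
  have h2 : Real.exp (-(c * x ^ 2)) ≤ 1 := by
    rw [Real.exp_le_one_iff]
    nlinarith [sq_nonneg x]
  have h3 := sn_sq_exp_le hc x
  have h4 : (0:ℝ) ≤ Real.exp (-(c * x ^ 2)) := (Real.exp_pos _).le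
  nlinarith [mul_le_mul_of_nonneg_right h1 h4]

/-- **Self-normalized supermartingale.** Under constant conditional mean `μ` and
conditional variance bound `σ²`, for any predictable process `l`, the process
`M_t^{SN} = ∏_{i=1}^t exp(l i (X i - μ) - l i² ((X i - μ)² + 2σ²)/6)` is a
nonnegative supermartingale. -/
theorem self_normalized_supermartingale
    {Ω : Type*} {mΩ : MeasurableSpace Ω} {P : Measure Ω} [IsProbabilityMeasure P]
    (ℱ : Filtration ℕ mΩ) (X l : ℕ → Ω → ℝ) (μ σ : ℝ)
    (hX_adapted : Adapted ℱ X)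
    (hX_sq : ∀ t, 1 ≤ t → MemLp (X t) 2 P)
    (hmean : ∀ t, 1 ≤ t → P[X t | ℱ (t - 1)] =ᵐ[P] fun _ => μ)
    (hvar : ∀ t, 1 ≤ t →
      ∀ᵐ ω ∂P, (P[fun ω' => (X t ω' - μ) ^ 2 | ℱ (t - 1)]) ω ≤ σ ^ 2)
    (hl_pred : ∀ t, 1 ≤ t → StronglyMeasurable[ℱ (t - 1)] (l t)) :
    Supermartingale
      (fun t ω => ∏ i ∈ Finset.Icc 1 t,
        Real.exp (l i ω * (X i ω - μ) -
          (l i ω) ^ 2 * ((X i ω - μ) ^ 2 + 2 * σ ^ 2) / 6)) ℱ P ∧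
    ∀ t ω, 0 ≤ ∏ i ∈ Finset.Icc 1 t,
        Real.exp (l i ω * (X i ω - μ) -
          (l i ω) ^ 2 * ((X i ω - μ) ^ 2 + 2 * σ ^ 2) / 6) := by
  refine ⟨?_, fun t ω => Finset.prod_nonneg fun i _ => (Real.exp_pos _).le⟩
  set g : ℕ → Ω → ℝ := fun i ω =>
    Real.exp (l i ω * (X i ω - μ) -
      (l i ω) ^ 2 * ((X i ω - μ) ^ 2 + 2 * σ ^ 2) / 6) with hgdef
  show Supermartingale (fun t ω => ∏ i ∈ Finset.Icc 1 t, g i ω) ℱ P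
  -- measurability of the factors
  have hg_meas : ∀ i t, 1 ≤ i → i ≤ t → StronglyMeasurable[ℱ t] (g i) := by
    intro i t h1 h2
    have hli : Measurable[ℱ t] (l i) :=
      ((hl_pred i h1).mono (ℱ.mono (by omega))).measurable
    have hXi : Measurable[ℱ t] (X i) := (hX_adapted i).mono (ℱ.mono h2) le_rfl
    refine (Real.measurable_exp.comp ?_).stronglyMeasurable
    exact (hli.mul (hXi.sub measurable_const)).sub
      (((hli.pow_const 2).mul
        (((hXi.sub measurable_const).pow_const 2).add_const (2 * σ ^ 2))).div_const 6)
  have hadp : StronglyAdapted ℱ (fun t ω => ∏ i ∈ Finset.Icc 1 t, g i ω) := fun t =>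
    Finset.stronglyMeasurable_fun_prod _ fun i hi =>
      hg_meas i t (Finset.mem_Icc.mp hi).1 (Finset.mem_Icc.mp hi).2
  -- uniform bound on the factors
  have hg_le : ∀ i ω, g i ω ≤ Real.exp (3 / 2) := by
    intro i ω
    rw [hgdef]
    apply Real.exp_le_exp.mpr
    nlinarith [sq_nonneg (l i ω * (X i ω - μ) - 3), sq_nonneg (l i ω * σ),
      mul_pow (l i ω) (X i ω - μ) 2, mul_pow (l i ω) σ 2]
  have hg_nonneg : ∀ i ω, 0 ≤ g i ω := fun i ω => (Real.exp_pos _).le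
  have hg_int : ∀ i, 1 ≤ i → Integrable (g i) P := by
    intro i hi
    refine (integrable_const (Real.exp (3 / 2))).mono'
      ((hg_meas i i hi le_rfl).mono (ℱ.le i)).aestronglyMeasurable
      (ae_of_all _ fun ω => ?_)
    rw [Real.norm_eq_abs, abs_of_nonneg (hg_nonneg i ω)]
    exact hg_le i ω
  have hint : ∀ t, Integrable (fun ω => ∏ i ∈ Finset.Icc 1 t, g i ω) P := by
    intro t
    refine (integrable_const (Real.exp (3 / 2) ^ (Finset.Icc 1 t).card)).mono'
      ((hadp t).mono (ℱ.le t)).aestronglyMeasurable (ae_of_all _ fun ω => ?_)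
    rw [Real.norm_eq_abs, abs_of_nonneg (Finset.prod_nonneg fun i _ => hg_nonneg i ω)]
    calc ∏ i ∈ Finset.Icc 1 t, g i ω
        ≤ ∏ _i ∈ Finset.Icc 1 t, Real.exp (3 / 2) :=
          Finset.prod_le_prod (fun i _ => hg_nonneg i ω) (fun i _ => hg_le i ω)
      _ = Real.exp (3 / 2) ^ (Finset.Icc 1 t).card := Finset.prod_const _
  -- key conditional expectation bound
  have hcond : ∀ t : ℕ, P[g (t + 1) | ℱ t] ≤ᵐ[P] fun _ => (1 : ℝ) := by
    intro t
    have ht1 : 1 ≤ t + 1 := by omega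
    have hX_int : Integrable (X (t + 1)) P := (hX_sq (t + 1) ht1).integrable one_le_two
    have hY2mem : MemLp (fun ω => X (t + 1) ω - μ) 2 P :=
      (hX_sq (t + 1) ht1).sub (memLp_const μ)
    have hY_int : Integrable (fun ω => X (t + 1) ω - μ) P := hY2mem.integrable one_le_two
    have hY2_int : Integrable (fun ω => (X (t + 1) ω - μ) ^ 2) P := hY2mem.integrable_sq
    have hmean' := hmean (t + 1) ht1
    simp only [Nat.add_sub_cancel] at hmean'
    have hvar' := hvar (t + 1) ht1
    simp only [Nat.add_sub_cancel] at hvar'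
    have hl' := hl_pred (t + 1) ht1
    change StronglyMeasurable[ℱ t] (l (t + 1)) at hl'
    have hcmean : P[fun ω => X (t + 1) ω - μ | ℱ t] =ᵐ[P] fun _ => (0 : ℝ) := by
      have hsub : (fun ω => X (t + 1) ω - μ) = X (t + 1) - fun _ => μ := rfl
      have h1 : P[X (t + 1) - fun _ => μ | ℱ t] =ᵐ[P]
          P[X (t + 1) | ℱ t] - P[(fun _ => μ : Ω → ℝ) | ℱ t] :=
        condExp_sub hX_int (integrable_const μ) _
      have h3 : P[(fun _ => μ : Ω → ℝ) | ℱ t] = fun _ => μ := condExp_const (ℱ.le t) μ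
      rw [hsub]
      filter_upwards [h1, hmean'] with ω e1 e2
      simp only [Pi.sub_apply] at e1
      rw [e1, e2, h3]
      simp
    by_cases hs : σ = 0
    · -- degenerate case: X (t+1) = μ a.e.
      have hnn : (fun _ => (0 : ℝ)) ≤ᵐ[P] P[fun ω' => (X (t + 1) ω' - μ) ^ 2 | ℱ t] :=
        condExp_nonneg (ae_of_all _ fun ω => sq_nonneg _)
      have hzero : P[fun ω' => (X (t + 1) ω' - μ) ^ 2 | ℱ t] =ᵐ[P] fun _ => (0 : ℝ) := by
        filter_upwards [hvar', hnn] with ω e1 e2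
        have : σ ^ 2 = 0 := by rw [hs]; ring
        exact le_antisymm (by linarith) e2
      have hintzero : ∫ ω, (X (t + 1) ω - μ) ^ 2 ∂P = 0 := by
        rw [← integral_condExp (ℱ.le t)]
        exact integral_eq_zero_of_ae hzero
      have hae : ∀ᵐ ω ∂P, X (t + 1) ω = μ := by
        have h0 := (integral_eq_zero_iff_of_nonneg_ae
          (ae_of_all _ fun ω => sq_nonneg (X (t + 1) ω - μ)) hY2_int).mp hintzero
        filter_upwards [h0] with ω h
        have h' : (X (t + 1) ω - μ) ^ 2 = 0 := h
        have := (pow_eq_zero_iff two_ne_zero).mp h'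
        linarith [this]
      have hgeq : g (t + 1) =ᵐ[P] fun _ => (1 : ℝ) := by
        filter_upwards [hae] with ω h
        simp [hgdef, h, hs]
      have := condExp_congr_ae (m := ℱ t) hgeq
      rw [condExp_const (ℱ.le t)] at this
      exact this.le
    · -- main case
      have hσ2 : 0 < σ ^ 2 := lt_of_le_of_ne (sq_nonneg σ) (Ne.symm (pow_ne_zero 2 hs))
      have hc : 0 < σ ^ 2 / 3 := by linarith
      set E : Ω → ℝ := fun ω => Real.exp (-(σ ^ 2 / 3 * l (t + 1) ω ^ 2)) with hE
      have hEle1 : ∀ ω, E ω ≤ 1 := by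
        intro ω
        rw [hE, Real.exp_le_one_iff]
        nlinarith [sq_nonneg (l (t + 1) ω)]
      have hEpos : ∀ ω, 0 < E ω := fun ω => Real.exp_pos _
      -- pointwise bound
      have hgh : ∀ ω, g (t + 1) ω ≤ E ω + (l (t + 1) ω * E ω) * (X (t + 1) ω - μ) +
          (l (t + 1) ω ^ 2 * E ω / 3) * (X (t + 1) ω - μ) ^ 2 := by
        intro ω
        have hexp : l (t + 1) ω * (X (t + 1) ω - μ) -
            l (t + 1) ω ^ 2 * ((X (t + 1) ω - μ) ^ 2 + 2 * σ ^ 2) / 6 =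
            (l (t + 1) ω * (X (t + 1) ω - μ) - (l (t + 1) ω * (X (t + 1) ω - μ)) ^ 2 / 6) +
            (-(σ ^ 2 / 3 * l (t + 1) ω ^ 2)) := by ring
        rw [hgdef]
        simp only
        rw [hexp, Real.exp_add]
        have h1 := mul_le_mul_of_nonneg_right (sn_key (l (t + 1) ω * (X (t + 1) ω - μ)))
          (hEpos ω).le
        calc Real.exp (l (t + 1) ω * (X (t + 1) ω - μ) -
                (l (t + 1) ω * (X (t + 1) ω - μ)) ^ 2 / 6) * E ω
            ≤ (1 + l (t + 1) ω * (X (t + 1) ω - μ) +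
                (l (t + 1) ω * (X (t + 1) ω - μ)) ^ 2 / 3) * E ω := h1
          _ = E ω + (l (t + 1) ω * E ω) * (X (t + 1) ω - μ) +
                (l (t + 1) ω ^ 2 * E ω / 3) * (X (t + 1) ω - μ) ^ 2 := by ring
      -- measurability
      have hlm : StronglyMeasurable[ℱ t] (l (t + 1)) := hl'
      have hEm : StronglyMeasurable[ℱ t] E := by
        refine (Real.measurable_exp.comp ?_).stronglyMeasurable
        exact ((hlm.measurable.pow_const 2).const_mul (σ ^ 2 / 3)).neg
      have hBm : StronglyMeasurable[ℱ t] (fun ω => l (t + 1) ω * E ω) := hlm.mul hEm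
      have hCm : StronglyMeasurable[ℱ t] (fun ω => l (t + 1) ω ^ 2 * E ω / 3) :=
        (((hlm.measurable.pow_const 2).mul hEm.measurable).div_const 3).stronglyMeasurable
      -- integrability of the three pieces
      have hAint : Integrable E P := by
        refine (integrable_const (1 : ℝ)).mono'
          (hEm.mono (ℱ.le t)).aestronglyMeasurable (ae_of_all _ fun ω => ?_)
        rw [Real.norm_eq_abs, abs_of_nonneg (hEpos ω).le]
        exact hEle1 ω
      have hBint : Integrable (fun ω => (l (t + 1) ω * E ω) * (X (t + 1) ω - μ)) P := by
        refine hY_int.bdd_mul ((hBm.mono (ℱ.le t)).aestronglyMeasurable) (c := 1 + 1 / (σ ^ 2 / 3))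
          (ae_of_all _ fun ω => ?_)
        rw [Real.norm_eq_abs, abs_mul, abs_of_nonneg (hEpos ω).le]
        exact sn_abs_exp_le hc (l (t + 1) ω)
      have hCint : Integrable (fun ω => (l (t + 1) ω ^ 2 * E ω / 3) * (X (t + 1) ω - μ) ^ 2) P := by
        refine hY2_int.bdd_mul ((hCm.mono (ℱ.le t)).aestronglyMeasurable) (c := 1 / (σ ^ 2 / 3) / 3)
          (ae_of_all _ fun ω => ?_)
        rw [Real.norm_eq_abs]
        have h1 := sn_sq_exp_le hc (l (t + 1) ω)
        have h2 : 0 ≤ l (t + 1) ω ^ 2 * E ω / 3 := by positivity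
        rw [abs_of_nonneg h2]
        rw [hE] at *
        linarith
      have hhint : Integrable (fun ω => E ω + (l (t + 1) ω * E ω) * (X (t + 1) ω - μ) +
          (l (t + 1) ω ^ 2 * E ω / 3) * (X (t + 1) ω - μ) ^ 2) P :=
        (hAint.add hBint).add hCint
      -- conditional expectation computation
      have hmono : P[g (t + 1) | ℱ t] ≤ᵐ[P]
          P[fun ω => E ω + (l (t + 1) ω * E ω) * (X (t + 1) ω - μ) +
            (l (t + 1) ω ^ 2 * E ω / 3) * (X (t + 1) ω - μ) ^ 2 | ℱ t] :=
        condExp_mono (hg_int (t + 1) ht1) hhint (ae_of_all _ hgh)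
      have hsplit2 : (fun ω => E ω + (l (t + 1) ω * E ω) * (X (t + 1) ω - μ) +
          (l (t + 1) ω ^ 2 * E ω / 3) * (X (t + 1) ω - μ) ^ 2) =
          (fun ω => E ω + (l (t + 1) ω * E ω) * (X (t + 1) ω - μ)) +
          (fun ω => (l (t + 1) ω ^ 2 * E ω / 3) * (X (t + 1) ω - μ) ^ 2) := rfl
      have hadd1 : P[fun ω => E ω + (l (t + 1) ω * E ω) * (X (t + 1) ω - μ) +
            (l (t + 1) ω ^ 2 * E ω / 3) * (X (t + 1) ω - μ) ^ 2 | ℱ t] =ᵐ[P]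
          P[fun ω => E ω + (l (t + 1) ω * E ω) * (X (t + 1) ω - μ) | ℱ t] +
          P[fun ω => (l (t + 1) ω ^ 2 * E ω / 3) * (X (t + 1) ω - μ) ^ 2 | ℱ t] := by
        rw [hsplit2]
        exact condExp_add (hAint.add hBint) hCint _
      have hadd2 : P[fun ω => E ω + (l (t + 1) ω * E ω) * (X (t + 1) ω - μ) | ℱ t] =ᵐ[P]
          P[E | ℱ t] + P[fun ω => (l (t + 1) ω * E ω) * (X (t + 1) ω - μ) | ℱ t] :=
        condExp_add hAint hBint _
      have hA : P[E | ℱ t] =ᵐ[P] E :=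
        (condExp_of_stronglyMeasurable (ℱ.le t) hEm hAint).symm ▸ EventuallyEq.rfl
      have hB : P[fun ω => (l (t + 1) ω * E ω) * (X (t + 1) ω - μ) | ℱ t] =ᵐ[P]
          fun ω => (l (t + 1) ω * E ω) * (P[fun ω' => X (t + 1) ω' - μ | ℱ t]) ω :=
        condExp_mul_of_stronglyMeasurable_left hBm hBint hY_int
      have hC : P[fun ω => (l (t + 1) ω ^ 2 * E ω / 3) * (X (t + 1) ω - μ) ^ 2 | ℱ t] =ᵐ[P]
          fun ω => (l (t + 1) ω ^ 2 * E ω / 3) *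
            (P[fun ω' => (X (t + 1) ω' - μ) ^ 2 | ℱ t]) ω :=
        condExp_mul_of_stronglyMeasurable_left hCm hCint hY2_int
      filter_upwards [hmono, hadd1, hadd2, hB, hC, hcmean, hvar'] with ω e0 e1 e2 eB eC em ev
      have hfinal : (P[fun ω => E ω + (l (t + 1) ω * E ω) * (X (t + 1) ω - μ) +
          (l (t + 1) ω ^ 2 * E ω / 3) * (X (t + 1) ω - μ) ^ 2 | ℱ t]) ω ≤ 1 := by
        rw [e1]
        simp only [Pi.add_apply]
        rw [e2]
        simp only [Pi.add_apply]
        rw [eB, eC, em]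
        have hAω : (P[E | ℱ t]) ω = E ω := by
          rw [condExp_of_stronglyMeasurable (ℱ.le t) hEm hAint]
        rw [hAω]
        have hvv : (P[fun ω' => (X (t + 1) ω' - μ) ^ 2 | ℱ t]) ω ≤ σ ^ 2 := ev
        have hvnn : 0 ≤ l (t + 1) ω ^ 2 * E ω / 3 := by positivity
        have step1 : E ω + l (t + 1) ω * E ω * 0 +
            l (t + 1) ω ^ 2 * E ω / 3 * (P[fun ω' => (X (t + 1) ω' - μ) ^ 2 | ℱ t]) ω ≤
            E ω * (1 + σ ^ 2 / 3 * l (t + 1) ω ^ 2) := by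
          have := mul_le_mul_of_nonneg_left hvv hvnn
          nlinarith [hEpos ω]
        have step2 : E ω * (1 + σ ^ 2 / 3 * l (t + 1) ω ^ 2) ≤ 1 := by
          have h1 := Real.add_one_le_exp (σ ^ 2 / 3 * l (t + 1) ω ^ 2)
          have h2 : E ω * Real.exp (σ ^ 2 / 3 * l (t + 1) ω ^ 2) = 1 := by
            rw [hE]
            rw [← Real.exp_add]
            simp
          nlinarith [hEpos ω]
        linarith
      exact le_trans e0 hfinal
  refine supermartingale_nat hadp hint fun t => ?_
  have hsplit : (fun ω => ∏ i ∈ Finset.Icc 1 (t + 1), g i ω) =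
      fun ω => (∏ i ∈ Finset.Icc 1 t, g i ω) * g (t + 1) ω :=
    funext fun ω => Finset.prod_Icc_succ_top (by omega) _
  have hmul : Integrable (fun ω => (∏ i ∈ Finset.Icc 1 t, g i ω) * g (t + 1) ω) P :=
    hsplit ▸ hint (t + 1)
  have h1 : P[fun ω => ∏ i ∈ Finset.Icc 1 (t + 1), g i ω | ℱ t] =ᵐ[P]
      fun ω => (∏ i ∈ Finset.Icc 1 t, g i ω) * (P[g (t + 1) | ℱ t]) ω := by
    rw [hsplit]
    exact condExp_mul_of_stronglyMeasurable_left (hadp t) hmul (hg_int (t + 1) (by omega))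
  filter_upwards [h1, hcond t] with ω hω h2
  rw [hω]
  exact mul_le_of_le_one_right (Finset.prod_nonneg fun i _ => hg_nonneg i ω) h2
end

section
/- Let {X_t}_{t∈ℕ⁺} be adapted to {F_t} with E[X_t | F_{t−1}] = μ and E[(X_t − μ)² | F_{t−1}] ≤ σ² almost surely for all t ∈ ℕ⁺, and let {λ_t}_{t∈ℕ⁺} be any predictable process. Define U_t^+ = (Σ_{i=1}^t λ_i² X_i)/3 − Σ_{i=1}^t λ_i and U_t^− = (Σ_{i=1}^t λ_i² X_i)/3 + Σ_{i=1}^t λ_i. Let aCI_t^{SN+} be the set of real m satisfying the quadratic inequality (Σλ_i²/6)·m² − U_t^+·m + ( log(2/α) − Σλ_i X_i + (Σλ_i² X_i² + 2σ²Σλ_i²)/6 ) < 0 (equivalently, the open interval whose endpoints are ( U_t^+ ± sqrt( (U_t^+)² − (2Σλ_i²/3)( log(2/α) − Σλ_i X_i + (Σλ_i² X_i² + 2σ²Σλ_i²)/6 ) ) ) / (Σλ_i²/3), taken to be empty when the discriminant is negative), and let aCI_t^{SN−} be the analogous set with U_t^− in place of U_t^+ and +Σλ_i X_i in place of −Σλ_i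 X_i. Then P(∀ t ∈ ℕ⁺, μ ∉ aCI_t^{SN+}) ≥ 1 − α/2 and P(∀ t ∈ ℕ⁺, μ ∉ aCI_t^{SN−}) ≥ 1 − α/2. -/
open MeasureTheory ProbabilityTheory Filter

section Aux
open Real

lemma delyon_key (x : ℝ) : 1 ≤ (1 + x + x^2/3) * Real.exp (x^2/6 - x) := by
  set f : ℝ → ℝ := fun y => (1 + y + y^2/3) * Real.exp (y^2/6 - y) with hf
  have hderiv : ∀ y : ℝ, HasDerivAt f (y^3/9 * Real.exp (y^2/6 - y)) y := by
    intro y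
    have h1 : HasDerivAt (fun y : ℝ => y^2/6 - y) (2*y/6 - 1) y :=
      ((hasDerivAt_pow 2 y).div_const 6).sub (hasDerivAt_id y) |>.congr_deriv (by ring)
    have h2 := h1.exp
    have h3 : HasDerivAt (fun y : ℝ => 1 + y + y^2/3) (0 + 1 + 2*y/3) y := by
      exact (((hasDerivAt_const y (1:ℝ)).add (hasDerivAt_id y)).add
        (((hasDerivAt_pow 2 y).div_const 3).congr_deriv (by ring)))
    have := h3.mul h2
    refine this.congr_deriv ?_
    ring
  have hcont : Continuous f := by fun_prop
  have hmono : MonotoneOn f (Set.Ici 0) := by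
    refine monotoneOn_of_deriv_nonneg (convex_Ici 0) hcont.continuousOn
      (fun y hy => (hderiv y).differentiableAt.differentiableWithinAt) (fun y hy => ?_)
    rw [(hderiv y).deriv]
    rw [interior_Ici] at hy
    have h0 : (0:ℝ) < y := hy
    positivity
  have hanti : AntitoneOn f (Set.Iic 0) := by
    refine antitoneOn_of_deriv_nonpos (convex_Iic 0) hcont.continuousOn
      (fun y hy => (hderiv y).differentiableAt.differentiableWithinAt) (fun y hy => ?_)
    rw [(hderiv y).deriv, interior_Iic] at *
    have hy' : y < 0 := hy
    have : y^3/9 ≤ 0 := by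
      have := Odd.pow_nonpos (by decide : Odd 3) hy'.le
      linarith
    exact mul_nonpos_of_nonpos_of_nonneg this (Real.exp_pos _).le
  have hf0 : f 0 = 1 := by simp [hf]
  rcases le_total 0 x with h | h
  · have := hmono (Set.self_mem_Ici) h h
    rwa [hf0] at this
  · have := hanti h (Set.self_mem_Iic) h
    rwa [hf0] at this

lemma delyon (x : ℝ) : Real.exp (x - x^2/6) ≤ 1 + x + x^2/3 := by
  have h := delyon_key x
  have hab : Real.exp (x - x^2/6) * Real.exp (x^2/6 - x) = 1 := by
    rw [← Real.exp_add]
    have : (x - x^2/6) + (x^2/6 - x) = 0 := by ring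
    rw [this, Real.exp_zero]
  nlinarith [Real.exp_pos (x - x^2/6), Real.exp_pos (x^2/6 - x)]

end Aux

private lemma term_le (z x μ σ : ℝ) :
    z * (x - μ) - z^2 * ((x - μ)^2 + 2*σ^2)/6 ≤ 3/2 := by
  nlinarith [sq_nonneg (z*(x-μ) - 3), sq_nonneg (σ*z)]

private lemma sum_identity (s : Finset ℕ) (l x : ℕ → ℝ) (μ σ : ℝ) :
    ∑ i ∈ s, (l i * (x i - μ) - (l i)^2 * ((x i - μ)^2 + 2*σ^2)/6)
    = (∑ i ∈ s, l i * x i) - μ * (∑ i ∈ s, l i) - (∑ i ∈ s, (l i)^2 * (x i)^2)/6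
      + μ * (∑ i ∈ s, (l i)^2 * x i)/3 - μ^2 * (∑ i ∈ s, (l i)^2)/6
      - σ^2 * (∑ i ∈ s, (l i)^2)/3 := by
  induction s using Finset.induction_on with
  | empty => simp
  | insert a s h ih =>
    simp only [Finset.sum_insert h, ih]
    ring

private lemma anticonf_key {Ω : Type*} {mΩ : MeasurableSpace Ω} {P : Measure Ω}
    [IsProbabilityMeasure P] (ℱ : Filtration ℕ mΩ) (X l : ℕ → Ω → ℝ) (μ σ α : ℝ)
    (hα : α ∈ Set.Ioo (0:ℝ) 1)
    (hX_adapted : StronglyAdapted ℱ X)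
    (hX_sq : ∀ t, 1 ≤ t → MemLp (X t) 2 P)
    (hmean : ∀ t, 1 ≤ t → P[X t | ℱ (t-1)] =ᵐ[P] fun _ => μ)
    (hvar : ∀ t, 1 ≤ t → ∀ᵐ ω ∂P, (P[fun ω' => (X t ω' - μ)^2 | ℱ (t-1)]) ω ≤ σ^2)
    (hl_pred : ∀ t, 1 ≤ t → StronglyMeasurable[ℱ (t-1)] (l t)) :
    ENNReal.ofReal (1 - α/2) ≤
      P {ω | ∀ t : ℕ, 1 ≤ t → ¬ (Real.log (2/α) <
        ∑ i ∈ Finset.Icc 1 t, (l i ω * (X i ω - μ) -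
          (l i ω)^2 * ((X i ω - μ)^2 + 2*σ^2)/6))} := by
  obtain ⟨hα0, hα1⟩ := hα
  set G : ℕ → Ω → ℝ := fun t ω => ∑ i ∈ Finset.Icc 1 t,
      (l i ω * (X i ω - μ) - (l i ω)^2 * ((X i ω - μ)^2 + 2*σ^2)/6) with hGdef
  set M : ℕ → Ω → ℝ := fun t ω => Real.exp (G t ω) with hMdef
  have hMpos : ∀ t ω, 0 < M t ω := fun t ω => Real.exp_pos _
  have hGle : ∀ t ω, G t ω ≤ 3/2 * t := by
    intro t ω
    calc G t ω ≤ ∑ i ∈ Finset.Icc 1 t, (3/2 : ℝ) :=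
          Finset.sum_le_sum (fun i _ => term_le _ _ _ _)
      _ = 3/2 * t := by
          rw [Finset.sum_const, Nat.card_Icc]
          simp [mul_comm]
  have hMle : ∀ t ω, M t ω ≤ Real.exp (3/2 * t) := fun t ω => Real.exp_le_exp.2 (hGle t ω)
  have hGmeas : ∀ t, Measurable[ℱ t] (G t) := by
    intro t
    apply Finset.measurable_sum
    intro i hi
    rw [Finset.mem_Icc] at hi
    have hl' : Measurable[ℱ t] (l i) :=
      (hl_pred i hi.1).measurable.mono (ℱ.mono (le_trans (Nat.sub_le i 1) hi.2)) le_rfl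
    have hX' : Measurable[ℱ t] (X i) :=
      (hX_adapted i).measurable.mono (ℱ.mono hi.2) le_rfl
    exact (hl'.mul (hX'.sub measurable_const)).sub
      (((hl'.pow_const 2).mul (((hX'.sub measurable_const).pow_const 2).add
        measurable_const)).div_const 6)
  have hMmeas : ∀ t, StronglyMeasurable[ℱ t] (M t) :=
    fun t => (Real.measurable_exp.comp (hGmeas t)).stronglyMeasurable
  have hMint : ∀ t, Integrable (M t) P := by
    intro t
    refine ⟨((hMmeas t).mono (ℱ.le t)).aestronglyMeasurable,
      HasFiniteIntegral.of_bounded (C := Real.exp (3/2 * t)) (ae_of_all _ fun ω => ?_)⟩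
    rw [Real.norm_eq_abs, abs_of_pos (hMpos t ω)]
    exact hMle t ω
  -- one-step supermartingale property
  have hstep : ∀ t : ℕ, P[M (t+1) | ℱ t] ≤ᵐ[P] M t := by
    intro t
    have h1t : 1 ≤ t + 1 := Nat.le_add_left 1 t
    set Z : Ω → ℝ := l (t+1) with hZdef
    set Y : Ω → ℝ := X (t+1) with hYdef
    have hZ : StronglyMeasurable[ℱ t] Z := by
      have := hl_pred (t+1) h1t
      simpa using this
    have hZm : Measurable[ℱ t] Z := hZ.measurable
    have hYm : Measurable Y := (hX_adapted (t+1)).measurable.mono (ℱ.le (t+1)) le_rfl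
    have hYsq : MemLp Y 2 P := hX_sq (t+1) h1t
    have hY1 : Integrable (fun ω => Y ω - μ) P := by
      have := (hYsq.sub (memLp_const μ)).integrable one_le_two
      exact this
    have hY2 : Integrable (fun ω => (Y ω - μ)^2) P := by
      have := (hYsq.sub (memLp_const μ)).integrable_sq
      simpa using this
    have hYmean : P[fun ω => Y ω - μ | ℱ t] =ᵐ[P] fun _ => 0 := by
      have h := hmean (t+1) h1t
      simp only [Nat.add_sub_cancel] at h
      have hsubeq : (fun ω => Y ω - μ) = Y - (fun _ => μ) := rfl
      rw [hsubeq]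
      have hs : P[Y - (fun _ => μ) | ℱ t] =ᵐ[P] P[Y | ℱ t] - P[(fun _ => μ) | ℱ t] :=
        condExp_sub (hYsq.integrable one_le_two) (integrable_const μ) (ℱ t)
      have hcst : P[(fun _ => μ) | ℱ t] = fun _ => μ := condExp_const (ℱ.le t) μ
      filter_upwards [hs, h] with ω e1 e2
      rw [e1]
      simp only [Pi.sub_apply, hcst, hYdef, e2]
      ring
    have hYvar : ∀ᵐ ω ∂P, (P[fun ω => (Y ω - μ)^2 | ℱ t]) ω ≤ σ^2 := by
      have := hvar (t+1) h1t
      simpa using this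
    set D : Ω → ℝ := fun ω =>
      Real.exp (Z ω * (Y ω - μ) - (Z ω)^2 * ((Y ω - μ)^2 + 2*σ^2)/6) with hDdef
    have hDm : Measurable D := by
      have hZm' : Measurable Z := hZm.mono (ℱ.le t) le_rfl
      exact Real.measurable_exp.comp
        ((hZm'.mul (hYm.sub measurable_const)).sub
          (((hZm'.pow_const 2).mul (((hYm.sub measurable_const).pow_const 2).add
            measurable_const)).div_const 6))
    have hDpos : ∀ ω, 0 < D ω := fun ω => Real.exp_pos _
    have hDle : ∀ ω, D ω ≤ Real.exp (3/2 : ℝ) :=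
      fun ω => Real.exp_le_exp.2 (term_le _ _ _ _)
    have hD_int : Integrable D P :=
      ⟨hDm.aestronglyMeasurable, HasFiniteIntegral.of_bounded (C := Real.exp (3/2:ℝ))
        (ae_of_all _ fun ω => by
          rw [Real.norm_eq_abs, abs_of_pos (hDpos ω)]; exact hDle ω)⟩
    have hsplit : M (t+1) = M t * D := by
      funext ω
      have hsum : G (t+1) ω = G t ω +
          (Z ω * (Y ω - μ) - (Z ω)^2 * ((Y ω - μ)^2 + 2*σ^2)/6) :=
        Finset.sum_Icc_succ_top h1t _
      show Real.exp (G (t+1) ω) = Real.exp (G t ω) * D ω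
      rw [hsum, Real.exp_add]
    -- the core bound on the conditional expectation of D
    have hcond : P[D | ℱ t] ≤ᵐ[P] fun _ => 1 := by
      have hAll : ∀ n : ℕ, ∀ᵐ ω ∂P, |Z ω| ≤ (n:ℝ) → (P[D | ℱ t]) ω ≤ 1 := by
        intro n
        set A : Set Ω := Z ⁻¹' (Set.Icc (-(n:ℝ)) (n:ℝ)) with hAdef
        have hA : MeasurableSet[ℱ t] A := hZm measurableSet_Icc
        set Zn : Ω → ℝ := A.indicator Z with hZndef
        have hZnm : Measurable[ℱ t] Zn := hZm.indicator hA
        have hZnsm : StronglyMeasurable[ℱ t] Zn := hZnm.stronglyMeasurable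
        have hZnm' : Measurable Zn := hZnm.mono (ℱ.le t) le_rfl
        have hZn_bdd : ∀ ω, |Zn ω| ≤ (n:ℝ) := by
          intro ω
          by_cases hmem : ω ∈ A
          · rw [hZndef, Set.indicator_of_mem hmem]
            exact abs_le.2 hmem
          · rw [hZndef, Set.indicator_of_notMem hmem]; simp
        set Dn : Ω → ℝ := fun ω =>
          Real.exp (Zn ω * (Y ω - μ) - (Zn ω)^2 * ((Y ω - μ)^2 + 2*σ^2)/6) with hDndef
        have hDnm : Measurable Dn :=
          Real.measurable_exp.comp
            ((hZnm'.mul (hYm.sub measurable_const)).sub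
              (((hZnm'.pow_const 2).mul (((hYm.sub measurable_const).pow_const 2).add
                measurable_const)).div_const 6))
        have hDn_int : Integrable Dn P :=
          ⟨hDnm.aestronglyMeasurable, HasFiniteIntegral.of_bounded (C := Real.exp (3/2:ℝ))
            (ae_of_all _ fun ω => by
              rw [Real.norm_eq_abs, abs_of_pos (Real.exp_pos _)]
              exact Real.exp_le_exp.2 (term_le _ _ _ _))⟩
        set u : Ω → ℝ := fun ω => Zn ω * (Y ω - μ) with hudef
        have hu_int : Integrable u P :=
          hY1.bdd_mul hZnm'.aestronglyMeasurable
            (ae_of_all _ fun ω => by rw [Real.norm_eq_abs]; exact hZn_bdd ω)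
        have hu2_int : Integrable (fun ω => (Zn ω)^2 * (Y ω - μ)^2) P :=
          hY2.bdd_mul (hZnm'.pow_const 2).aestronglyMeasurable
            (c := (n:ℝ)^2) (ae_of_all _ fun ω => by
              rw [Real.norm_eq_abs, abs_pow]
              exact pow_le_pow_left₀ (abs_nonneg _) (hZn_bdd ω) 2)
        set h : Ω → ℝ := fun ω => 1 + u ω + (Zn ω)^2 * (Y ω - μ)^2/3 with hhdef
        have hh_int : Integrable h P := by
          have := ((integrable_const (1:ℝ)).add hu_int).add (hu2_int.div_const 3)
          exact this
        set E : Ω → ℝ := fun ω => Real.exp (-(σ^2 * (Zn ω)^2/3)) with hEdef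
        have hEsm : StronglyMeasurable[ℱ t] E :=
          (Real.measurable_exp.comp
            (((measurable_const.mul (hZnm.pow_const 2)).div_const 3).neg)).stronglyMeasurable
        have hE_pos : ∀ ω, 0 < E ω := fun ω => Real.exp_pos _
        have hE_le : ∀ ω, E ω ≤ 1 := by
          intro ω
          rw [hEdef]
          refine Real.exp_le_one_iff.2 ?_
          simp only [neg_nonpos]
          positivity
        set Bn : Ω → ℝ := E * h with hBndef
        have hBn_int : Integrable Bn P :=
          hh_int.bdd_mul ((hEsm.mono (ℱ.le t)).measurable).aestronglyMeasurable
            (ae_of_all _ fun ω => by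
              rw [Real.norm_eq_abs, abs_of_pos (hE_pos ω)]; exact hE_le ω)
        have hDnBn : ∀ ω, Dn ω ≤ Bn ω := by
          intro ω
          have harg : Zn ω * (Y ω - μ) - (Zn ω)^2 * ((Y ω - μ)^2 + 2*σ^2)/6
              = (u ω - (u ω)^2/6) + (-(σ^2 * (Zn ω)^2/3)) := by
            simp only [hudef]; ring
          show Real.exp _ ≤ (E * h) ω
          rw [harg, Real.exp_add]
          have hd := delyon (u ω)
          calc Real.exp (u ω - (u ω)^2/6) * Real.exp (-(σ^2 * (Zn ω)^2/3))
              ≤ (1 + u ω + (u ω)^2/3) * Real.exp (-(σ^2 * (Zn ω)^2/3)) :=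
                mul_le_mul_of_nonneg_right hd (Real.exp_pos _).le
            _ = (E * h) ω := by
                simp only [Pi.mul_apply, hEdef, hhdef, hudef]
                ring
        have c1 : P[Dn | ℱ t] ≤ᵐ[P] P[Bn | ℱ t] :=
          condExp_mono hDn_int hBn_int (ae_of_all _ hDnBn)
        have c2 : P[Bn | ℱ t] =ᵐ[P] E * P[h | ℱ t] :=
          condExp_mul_of_stronglyMeasurable_left hEsm (hBndef ▸ hBn_int) hh_int
        have cu : P[u | ℱ t] =ᵐ[P] fun _ => 0 := by
          have hpull : P[Zn * (fun ω => Y ω - μ) | ℱ t] =ᵐ[P]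
              Zn * P[fun ω => Y ω - μ | ℱ t] :=
            condExp_mul_of_stronglyMeasurable_left hZnsm (by exact hu_int) hY1
          have huu : u = Zn * (fun ω => Y ω - μ) := rfl
          rw [huu]
          filter_upwards [hpull, hYmean] with ω e1 e2
          rw [e1]
          simp [e2]
        have cv : P[fun ω => (Zn ω)^2 * (Y ω - μ)^2/3 | ℱ t] ≤ᵐ[P]
            fun ω => σ^2 * (Zn ω)^2/3 := by
          have hveq : (fun ω => (Zn ω)^2 * (Y ω - μ)^2/3)
              = (fun ω => (Zn ω)^2/3) * (fun ω => (Y ω - μ)^2) := by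
            funext ω; simp only [Pi.mul_apply]; ring
          have hv_int : Integrable ((fun ω => (Zn ω)^2/3) * (fun ω => (Y ω - μ)^2)) P := by
            rw [← hveq]; exact hu2_int.div_const 3
          have hpull : P[(fun ω => (Zn ω)^2/3) * (fun ω => (Y ω - μ)^2) | ℱ t] =ᵐ[P]
              (fun ω => (Zn ω)^2/3) * P[fun ω => (Y ω - μ)^2 | ℱ t] :=
            condExp_mul_of_stronglyMeasurable_left ((hZnm.pow_const 2).div_const 3).stronglyMeasurable
              hv_int hY2
          rw [hveq]
          filter_upwards [hpull, hYvar] with ω e1 e2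
          rw [e1]
          simp only [Pi.mul_apply]
          calc (Zn ω)^2/3 * (P[fun ω => (Y ω - μ)^2 | ℱ t]) ω
              ≤ (Zn ω)^2/3 * σ^2 := by
                refine mul_le_mul_of_nonneg_left e2 (by positivity)
            _ = σ^2 * (Zn ω)^2/3 := by ring
        have c3 : P[h | ℱ t] ≤ᵐ[P] fun ω => 1 + σ^2 * (Zn ω)^2/3 := by
          have hheq : h = ((fun _ => (1:ℝ)) + u) + (fun ω => (Zn ω)^2 * (Y ω - μ)^2/3) := by
            funext ω; simp [hhdef]
          rw [hheq]
          have ha1 : P[((fun _ => (1:ℝ)) + u) + (fun ω => (Zn ω)^2 * (Y ω - μ)^2/3) | ℱ t]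
              =ᵐ[P] P[(fun _ => (1:ℝ)) + u | ℱ t]
                + P[fun ω => (Zn ω)^2 * (Y ω - μ)^2/3 | ℱ t] :=
            condExp_add ((integrable_const _).add hu_int) (hu2_int.div_const 3) (ℱ t)
          have ha2 : P[(fun _ => (1:ℝ)) + u | ℱ t] =ᵐ[P]
              P[fun _ => (1:ℝ) | ℱ t] + P[u | ℱ t] :=
            condExp_add (integrable_const _) hu_int (ℱ t)
          have hcst : P[(fun _ => (1:ℝ)) | ℱ t] = fun _ => 1 := condExp_const (ℱ.le t) 1
          filter_upwards [ha1, ha2, cu, cv] with ω e1 e2 e3 e4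
          rw [e1]
          simp only [Pi.add_apply, e2, hcst, e3]
          simpa using e4
        have hDn_le : P[Dn | ℱ t] ≤ᵐ[P] fun _ => (1:ℝ) := by
          have hEbound : ∀ v : ℝ, 0 ≤ v → Real.exp (-v) * (1 + v) ≤ 1 := by
            intro v hv
            calc Real.exp (-v) * (1 + v) ≤ Real.exp (-v) * Real.exp v := by
                  refine mul_le_mul_of_nonneg_left ?_ (Real.exp_pos _).le
                  linarith [Real.add_one_le_exp v]
              _ = 1 := by rw [← Real.exp_add]; simp
          filter_upwards [c1, c2, c3] with ω e1 e2 e3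
          refine le_trans e1 ?_
          rw [e2]
          simp only [Pi.mul_apply]
          calc E ω * (P[h | ℱ t]) ω ≤ E ω * (1 + σ^2 * (Zn ω)^2/3) :=
                mul_le_mul_of_nonneg_left e3 (hE_pos ω).le
            _ ≤ 1 := hEbound _ (by positivity)
        set IA : Ω → ℝ := A.indicator (fun _ => 1) with hIAdef
        have hIA_sm : StronglyMeasurable[ℱ t] IA := stronglyMeasurable_const.indicator hA
        have hIA_bdd : ∀ ω, ‖IA ω‖ ≤ 1 := by
          intro ω
          rw [hIAdef, Real.norm_eq_abs]
          by_cases hmem : ω ∈ A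
          · rw [Set.indicator_of_mem hmem]; simp
          · rw [Set.indicator_of_notMem hmem]; simp
        have hIAD_int : Integrable (IA * D) P := by
          have := hD_int.bdd_mul
            ((hIA_sm.mono (ℱ.le t)).measurable).aestronglyMeasurable (ae_of_all _ hIA_bdd)
          exact this
        have hIADn_int : Integrable (IA * Dn) P := by
          have := hDn_int.bdd_mul
            ((hIA_sm.mono (ℱ.le t)).measurable).aestronglyMeasurable (ae_of_all _ hIA_bdd)
          exact this
        have heq : IA * D = IA * Dn := by
          funext ω
          simp only [Pi.mul_apply]
          by_cases hmem : ω ∈ A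
          · have hz : Zn ω = Z ω := Set.indicator_of_mem hmem _
            simp only [hDndef, hDdef, hz]
          · simp [hIAdef, Set.indicator_of_notMem hmem]
        have p1 : P[IA * D | ℱ t] =ᵐ[P] IA * P[D | ℱ t] :=
          condExp_mul_of_stronglyMeasurable_left hIA_sm hIAD_int hD_int
        have p2 : P[IA * Dn | ℱ t] =ᵐ[P] IA * P[Dn | ℱ t] :=
          condExp_mul_of_stronglyMeasurable_left hIA_sm hIADn_int hDn_int
        rw [heq] at p1
        filter_upwards [p1.symm.trans p2, hDn_le] with ω e1 e2 hmem
        have hmA : ω ∈ A := Set.mem_preimage.2 (Set.mem_Icc.2 (abs_le.1 hmem))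
        have hone : IA ω = 1 := Set.indicator_of_mem hmA _
        simp only [Pi.mul_apply, hone, one_mul] at e1
        rw [e1]
        exact e2
      have hae := ae_all_iff.2 hAll
      filter_upwards [hae] with ω hω
      exact hω ⌈|Z ω|⌉₊ (Nat.le_ceil _)
    -- combine
    have hmul : P[M t * D | ℱ t] =ᵐ[P] M t * P[D | ℱ t] :=
      condExp_mul_of_stronglyMeasurable_left (hMmeas t) (hsplit ▸ hMint (t+1)) hD_int
    rw [hsplit]
    filter_upwards [hmul, hcond] with ω e1 e2
    rw [e1]
    simp only [Pi.mul_apply]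
    calc M t ω * (P[D | ℱ t]) ω ≤ M t ω * 1 :=
          mul_le_mul_of_nonneg_left e2 (hMpos t ω).le
      _ = M t ω := mul_one _
  have hsuper : Supermartingale M ℱ P :=
    supermartingale_nat (fun t => hMmeas t) hMint hstep
  -- Ville's inequality, finite horizon
  have hc0 : (0:ℝ) < 2/α := by positivity
  set S : ℕ → Set Ω := fun n => ⋃ j ∈ Set.Iic n, {ω | 2/α ≤ M j ω} with hSdef
  have hSmeas : ∀ n, MeasurableSet (S n) := by
    intro n
    refine MeasurableSet.biUnion (Set.to_countable _) (fun j _ => ?_)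
    exact measurableSet_le measurable_const
      ((Real.measurable_exp.comp ((hGmeas j).mono (ℱ.le j) le_rfl)))
  have hSmem : ∀ n ω, ω ∈ S n ↔ ∃ j ≤ n, 2/α ≤ M j ω := by
    intro n ω; simp [hSdef]
  have hville : ∀ n, P (S n) ≤ ENNReal.ofReal (α/2) := by
    intro n
    set τ : Ω → ℕ∞ := fun ω => ((hittingBtwn M (Set.Ici (2/α)) 0 n ω : ℕ) : ℕ∞) with hτdef
    have hτ : IsStoppingTime ℱ τ :=
      hsuper.stronglyAdapted.adapted.isStoppingTime_hittingBtwn measurableSet_Ici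
    have hτle : ∀ ω, τ ω ≤ n := fun ω => Nat.cast_le.2 (hittingBtwn_le ω)
    have hsub := hsuper.neg
    have hsvneg : stoppedValue (-M) τ = -(stoppedValue M τ) := rfl
    have hsv_int : Integrable (stoppedValue M τ) P := by
      have h := hsub.integrable_stoppedValue hτ hτle
      rw [hsvneg] at h
      simpa using h.neg
    have hopt := hsub.expected_stoppedValue_mono (isStoppingTime_const ℱ 0) hτ
      (fun ω => by exact_mod_cast (zero_le : 0 ≤ τ ω)) hτle
    have hint_le_one : ∫ ω, stoppedValue M τ ω ∂P ≤ 1 := by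
      have h1 : ∫ ω, stoppedValue (-M) (fun _ => WithTop.some (0:ℕ)) ω ∂P = -1 := by
        have he : stoppedValue (-M) (fun _ => WithTop.some (0:ℕ)) = fun ω => -(M 0 ω) := rfl
        rw [he]
        have hM0 : ∀ ω, M 0 ω = 1 := by
          intro ω
          simp [hMdef, hGdef]
        simp only [hM0]
        simp
      have h2 : ∫ ω, stoppedValue (-M) τ ω ∂P = - ∫ ω, stoppedValue M τ ω ∂P := by
        rw [hsvneg]
        simp only [Pi.neg_apply]
        exact integral_neg _
      rw [h1, h2] at hopt
      linarith
    have hset : (2/α) * (P (S n)).toReal ≤ 1 := by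
      have hg : ∀ ω ∈ S n, (2/α) ≤ stoppedValue M τ ω := by
        intro ω hω
        obtain ⟨j, hjn, hj⟩ := (hSmem n ω).1 hω
        exact stoppedValue_hittingBtwn_mem ⟨j, ⟨Nat.zero_le _, hjn⟩, hj⟩
      calc (2/α) * (P (S n)).toReal = ∫ _ in S n, (2/α) ∂P := by
            rw [setIntegral_const, smul_eq_mul, mul_comm, measureReal_def]
        _ ≤ ∫ ω in S n, stoppedValue M τ ω ∂P :=
            setIntegral_mono_on (integrable_const _).integrableOn hsv_int.integrableOn
              (hSmeas n) hg
        _ ≤ ∫ ω, stoppedValue M τ ω ∂P :=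
            setIntegral_le_integral hsv_int (ae_of_all _ fun ω => (hMpos _ _).le)
        _ ≤ 1 := hint_le_one
    have htoReal : (P (S n)).toReal ≤ α/2 := by
      rw [mul_comm] at hset
      have h := (le_div_iff₀ hc0).2 hset
      rwa [one_div_div] at h
    calc P (S n) = ENNReal.ofReal (P (S n)).toReal :=
          (ENNReal.ofReal_toReal (measure_ne_top _ _)).symm
      _ ≤ ENNReal.ofReal (α/2) := ENNReal.ofReal_le_ofReal htoReal
  have hSmono : Monotone S := by
    intro a b hab
    refine Set.biUnion_subset_biUnion_left ?_
    exact Set.Iic_subset_Iic.2 hab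
  have hUnion : P (⋃ n, S n) ≤ ENNReal.ofReal (α/2) := by
    rw [hSmono.directed_le.measure_iUnion]
    exact iSup_le hville
  have hsubset : (⋃ n, S n)ᶜ ⊆ {ω | ∀ t : ℕ, 1 ≤ t → ¬ (Real.log (2/α) < G t ω)} := by
    intro ω hω t _ hlt
    have hMgt : 2/α ≤ M t ω := ((Real.log_lt_iff_lt_exp hc0).1 hlt).le
    exact hω (Set.mem_iUnion.2 ⟨t, (hSmem t ω).2 ⟨t, le_rfl, hMgt⟩⟩)
  calc ENNReal.ofReal (1 - α/2) = 1 - ENNReal.ofReal (α/2) := by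
        rw [ENNReal.ofReal_sub _ (by positivity), ENNReal.ofReal_one]
    _ ≤ 1 - P (⋃ n, S n) := tsub_le_tsub_left hUnion 1
    _ = P ((⋃ n, S n)ᶜ) := by
        rw [measure_compl (MeasurableSet.iUnion hSmeas) (measure_ne_top _ _), measure_univ]
    _ ≤ _ := measure_mono hsubset

/-- **Self-normalized anticonfidence sequences.** With `U_t^± = (∑ l_i² X_i)/3 ∓ ∑ l_i`
and `aCI_t^{SN±}` the solution sets of the corresponding quadratic inequalities, each of
`{aCI_t^{SN+}}` and `{aCI_t^{SN−}}` is a `(1-α/2)`-anticonfidence sequence for `μ`. -/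
theorem self_normalized_anticonfidence_sequence
    {Ω : Type*} {mΩ : MeasurableSpace Ω} {P : Measure Ω} [IsProbabilityMeasure P]
    (ℱ : Filtration ℕ mΩ) (X l : ℕ → Ω → ℝ) (μ σ α : ℝ)
    (hα : α ∈ Set.Ioo (0 : ℝ) 1)
    (hX_adapted : StronglyAdapted ℱ X)
    (hX_sq : ∀ t, 1 ≤ t → MemLp (X t) 2 P)
    (hmean : ∀ t, 1 ≤ t → P[X t | ℱ (t - 1)] =ᵐ[P] fun _ => μ)
    (hvar : ∀ t, 1 ≤ t →
      ∀ᵐ ω ∂P, (P[fun ω' => (X t ω' - μ) ^ 2 | ℱ (t - 1)]) ω ≤ σ ^ 2)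
    (hl_pred : ∀ t, 1 ≤ t → StronglyMeasurable[ℱ (t - 1)] (l t))
    -- the anticonfidence sets, described by their defining quadratic inequalities
    (aCIp aCIm : ℕ → Ω → Set ℝ)
    (haCIp : ∀ t ω, aCIp t ω = {m : ℝ |
      (∑ i ∈ Finset.Icc 1 t, (l i ω) ^ 2) / 6 * m ^ 2 -
        ((∑ i ∈ Finset.Icc 1 t, (l i ω) ^ 2 * X i ω) / 3 -
          ∑ i ∈ Finset.Icc 1 t, l i ω) * m +
        (Real.log (2 / α) - ∑ i ∈ Finset.Icc 1 t, l i ω * X i ω +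
          (∑ i ∈ Finset.Icc 1 t, (l i ω) ^ 2 * (X i ω) ^ 2 +
            2 * σ ^ 2 * ∑ i ∈ Finset.Icc 1 t, (l i ω) ^ 2) / 6) < 0})
    (haCIm : ∀ t ω, aCIm t ω = {m : ℝ |
      (∑ i ∈ Finset.Icc 1 t, (l i ω) ^ 2) / 6 * m ^ 2 -
        ((∑ i ∈ Finset.Icc 1 t, (l i ω) ^ 2 * X i ω) / 3 +
          ∑ i ∈ Finset.Icc 1 t, l i ω) * m +
        (Real.log (2 / α) + ∑ i ∈ Finset.Icc 1 t, l i ω * X i ω +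
          (∑ i ∈ Finset.Icc 1 t, (l i ω) ^ 2 * (X i ω) ^ 2 +
            2 * σ ^ 2 * ∑ i ∈ Finset.Icc 1 t, (l i ω) ^ 2) / 6) < 0}) :
    ENNReal.ofReal (1 - α / 2) ≤ P {ω | ∀ t : ℕ, 1 ≤ t → μ ∉ aCIp t ω} ∧
    ENNReal.ofReal (1 - α / 2) ≤ P {ω | ∀ t : ℕ, 1 ≤ t → μ ∉ aCIm t ω} := by
  constructor
  · refine le_trans (anticonf_key ℱ X l μ σ α hα hX_adapted hX_sq hmean hvar hl_pred)
      (measure_mono ?_)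
    intro ω hω t ht hmem
    rw [haCIp t ω] at hmem
    simp only [Set.mem_setOf_eq] at hmem hω
    refine hω t ht ?_
    have hid := sum_identity (Finset.Icc 1 t) (fun i => l i ω) (fun i => X i ω) μ σ
    rw [hid]
    linarith
  · have hl' : ∀ t, 1 ≤ t → StronglyMeasurable[ℱ (t-1)] ((fun i => -(l i)) t) :=
      fun t ht => (hl_pred t ht).neg
    refine le_trans (anticonf_key ℱ X (fun i => -(l i)) μ σ α hα hX_adapted hX_sq
      hmean hvar hl') (measure_mono ?_)
    intro ω hω t ht hmem
    rw [haCIm t ω] at hmem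
    simp only [Set.mem_setOf_eq, Pi.neg_apply] at hmem hω
    refine hω t ht ?_
    simp only [neg_mul, neg_sq]
    have hid := sum_identity (Finset.Icc 1 t) (fun i => -(l i ω)) (fun i => X i ω) μ σ
    simp only [neg_mul, neg_neg, neg_sq, Finset.sum_neg_distrib] at hid
    rw [hid]
    linarith
end

section
/- Let {X_t}_{t∈ℕ⁺} be adapted to {F_t} with E[X_t | F_{t−1}] = μ and E[(X_t − μ)² | F_{t−1}] ≤ σ² almost surely for all t ∈ ℕ⁺, let {λ_t}_{t∈ℕ⁺} be any predictable process, and let φ be a Catoni-type influence function. Then the processes M_t^C = Π_{i=1}^t exp( φ(λ_i(X_i − μ)) − λ_i²σ²/2 ) and N_t^C = Π_{i=1}^t exp( −φ(λ_i(X_i − μ)) − λ_i²σ²/2 ), each equal to 1 at t = 0, are nonnegative supermartingales with respect to {F_t}. -/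
open MeasureTheory ProbabilityTheory Filter

section CatoniAux

variable {Ω : Type*} {mΩ : MeasurableSpace Ω} {P : Measure Ω}

private lemma catoni_damp_abs (σ : ℝ) (hσ : σ ≠ 0) (u : ℝ) :
    |u| * Real.exp (-(u ^ 2 * σ ^ 2 / 2)) ≤ Real.sqrt 2 / |σ| := by
  have hσ' : 0 < |σ| := abs_pos.2 hσ
  have h1 : u ^ 2 * σ ^ 2 / 2 + 1 ≤ Real.exp (u ^ 2 * σ ^ 2 / 2) := Real.add_one_le_exp _
  have h3 : 0 < Real.exp (u ^ 2 * σ ^ 2 / 2) := Real.exp_pos _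
  rw [Real.exp_neg, ← div_eq_mul_inv, div_le_div_iff₀ h3 hσ']
  have hsq : u ^ 2 * σ ^ 2 = (|u| * |σ|) ^ 2 := by
    rw [mul_pow, sq_abs, sq_abs]
  have hs2 : Real.sqrt 2 ^ 2 = 2 := Real.sq_sqrt (by norm_num)
  have hs0 : 0 < Real.sqrt 2 := Real.sqrt_pos.2 (by norm_num)
  have ha : 0 ≤ |u| * |σ| := mul_nonneg (abs_nonneg u) (abs_nonneg σ)
  nlinarith [sq_nonneg (|u| * |σ| - Real.sqrt 2), mul_le_mul_of_nonneg_left h1 hs0.le]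

private lemma catoni_damp_sq (σ : ℝ) (hσ : σ ≠ 0) (u : ℝ) :
    u ^ 2 * Real.exp (-(u ^ 2 * σ ^ 2 / 2)) ≤ 2 / σ ^ 2 := by
  have hσ2 : 0 < σ ^ 2 := by positivity
  have h1 : u ^ 2 * σ ^ 2 / 2 + 1 ≤ Real.exp (u ^ 2 * σ ^ 2 / 2) := Real.add_one_le_exp _
  have h3 : 0 < Real.exp (u ^ 2 * σ ^ 2 / 2) := Real.exp_pos _
  rw [Real.exp_neg, ← div_eq_mul_inv, div_le_div_iff₀ h3 hσ2]
  nlinarith [sq_nonneg u]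

/-- Truncation argument: a nonnegative `m`-measurable integrable `g` times a nonnegative
integrable `f` whose conditional expectation is at most `1` is integrable. -/
private lemma catoni_integrable_mul {m : MeasurableSpace Ω} (hm : m ≤ mΩ)
    [IsProbabilityMeasure P] {g f : Ω → ℝ}
    (hg_meas : StronglyMeasurable[m] g) (hg_nonneg : ∀ ω, 0 ≤ g ω) (hg_int : Integrable g P)
    (hf_meas : AEStronglyMeasurable[mΩ] f P) (hf_nonneg : ∀ ω, 0 ≤ f ω) (hf_int : Integrable f P)
    (hf_cond : P[f | m] ≤ᵐ[P] fun _ => 1) :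
    Integrable (g * f) P := by
  set gk : ℕ → Ω → ℝ := fun k ω => min (g ω) k with hgk_def
  have hgk_sm : ∀ k, StronglyMeasurable[m] (gk k) := fun k =>
    (hg_meas.measurable.min measurable_const).stronglyMeasurable
  have hgk_nonneg : ∀ k ω, 0 ≤ gk k ω := fun k ω =>
    le_min (hg_nonneg ω) (Nat.cast_nonneg k)
  have hgk_bdd : ∀ k ω, ‖gk k ω‖ ≤ (k : ℝ) := by
    intro k ω
    rw [Real.norm_eq_abs, abs_of_nonneg (hgk_nonneg k ω)]
    exact min_le_right _ _
  have hgkf_int : ∀ k, Integrable (fun ω => gk k ω * f ω) P := fun k =>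
    hf_int.bdd_mul ((hgk_sm k).mono hm).aestronglyMeasurable (ae_of_all _ (hgk_bdd k))
  have hint_le : ∀ k, ∫ ω, gk k ω * f ω ∂P ≤ ∫ ω, g ω ∂P := by
    intro k
    have h1 : ∫ ω, gk k ω * f ω ∂P = ∫ ω, (P[gk k * f | m]) ω ∂P :=
      (integral_condExp hm).symm
    rw [h1]
    have h2 : P[gk k * f | m] =ᵐ[P] gk k * P[f | m] :=
      condExp_mul_of_stronglyMeasurable_left (hgk_sm k) (hgkf_int k) hf_int
    rw [integral_congr_ae h2]
    have h4 : Integrable (fun ω => gk k ω * (P[f | m]) ω) P :=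
      integrable_condExp.bdd_mul ((hgk_sm k).mono hm).aestronglyMeasurable (ae_of_all _ (hgk_bdd k))
    refine integral_mono_ae h4 hg_int ?_
    filter_upwards [hf_cond] with ω hω
    calc gk k ω * (P[f | m]) ω ≤ gk k ω * 1 :=
          mul_le_mul_of_nonneg_left hω (hgk_nonneg k ω)
      _ = gk k ω := mul_one _
      _ ≤ g ω := min_le_left _ _
  have hsup : ∀ ω, (⨆ k : ℕ, ENNReal.ofReal (gk k ω * f ω)) = ENNReal.ofReal (g ω * f ω) := by
    intro ω
    refine le_antisymm (iSup_le fun k => ENNReal.ofReal_le_ofReal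
      (mul_le_mul_of_nonneg_right (min_le_left _ _) (hf_nonneg ω))) ?_
    refine le_iSup_of_le ⌈g ω⌉₊ (le_of_eq ?_)
    congr 2
    exact (min_eq_left (Nat.le_ceil _)).symm
  have hmono : ∀ ω, Monotone fun k : ℕ => ENNReal.ofReal (gk k ω * f ω) := by
    intro ω k j hkj
    exact ENNReal.ofReal_le_ofReal (mul_le_mul_of_nonneg_right
      (min_le_min le_rfl (Nat.cast_le.2 hkj)) (hf_nonneg ω))
  have hmeas_k : ∀ k : ℕ, AEMeasurable (fun ω => ENNReal.ofReal (gk k ω * f ω)) P := fun k =>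
    ENNReal.measurable_ofReal.comp_aemeasurable
      ((((hgk_sm k).mono hm).aestronglyMeasurable.aemeasurable).mul hf_meas.aemeasurable)
  constructor
  · exact (hg_meas.mono hm).aestronglyMeasurable.mul hf_meas
  · rw [hasFiniteIntegral_iff_ofReal (f := g * f)
      (ae_of_all _ fun ω => mul_nonneg (hg_nonneg ω) (hf_nonneg ω))]
    have hlin : ∫⁻ ω, ENNReal.ofReal (g ω * f ω) ∂P
        = ⨆ k : ℕ, ∫⁻ ω, ENNReal.ofReal (gk k ω * f ω) ∂P := by
      rw [← lintegral_iSup' hmeas_k (ae_of_all _ hmono)]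
      exact lintegral_congr fun ω => (hsup ω).symm
    calc ∫⁻ ω, ENNReal.ofReal ((g * f) ω) ∂P
        = ⨆ k : ℕ, ∫⁻ ω, ENNReal.ofReal (gk k ω * f ω) ∂P := hlin
      _ ≤ ENNReal.ofReal (∫ ω, g ω ∂P) := by
          refine iSup_le fun k => ?_
          rw [← ofReal_integral_eq_lintegral_ofReal (hgkf_int k)
            (ae_of_all _ fun ω => mul_nonneg (hgk_nonneg k ω) (hf_nonneg ω))]
          exact ENNReal.ofReal_le_ofReal (hint_le k)
      _ < ⊤ := ENNReal.ofReal_lt_top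

private lemma catoni_condexp_mul_le {m : MeasurableSpace Ω} (hm : m ≤ mΩ)
    [IsProbabilityMeasure P] {g f : Ω → ℝ}
    (hg_meas : StronglyMeasurable[m] g) (hg_nonneg : ∀ ω, 0 ≤ g ω) (hg_int : Integrable g P)
    (hf_meas : AEStronglyMeasurable[mΩ] f P) (hf_nonneg : ∀ ω, 0 ≤ f ω) (hf_int : Integrable f P)
    (hf_cond : P[f | m] ≤ᵐ[P] fun _ => 1) :
    P[g * f | m] ≤ᵐ[P] g := by
  have hgf := catoni_integrable_mul hm hg_meas hg_nonneg hg_int hf_meas hf_nonneg hf_int hf_cond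
  have h := condExp_mul_of_stronglyMeasurable_left hg_meas hgf hf_int
  filter_upwards [h, hf_cond] with ω h1 h2
  rw [h1]
  calc g ω * (P[f | m]) ω ≤ g ω * 1 := mul_le_mul_of_nonneg_left h2 (hg_nonneg ω)
    _ = g ω := mul_one _

/-- One-step bound: the Catoni increment is integrable and has conditional
expectation at most `1`. -/
private lemma catoni_step {m : MeasurableSpace Ω} (hm : m ≤ mΩ) [IsProbabilityMeasure P]
    {φ : ℝ → ℝ} (hφ_mono : Monotone φ)
    (hφ_lb : ∀ x : ℝ, -Real.log (1 - x + x ^ 2 / 2) ≤ φ x)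
    (hφ_ub : ∀ x : ℝ, φ x ≤ Real.log (1 + x + x ^ 2 / 2))
    {b Z : Ω → ℝ} (σ : ℝ)
    (hb : StronglyMeasurable[m] b) (hZ : MemLp Z 2 P)
    (hZmean : P[Z | m] =ᵐ[P] fun _ => 0)
    (hZvar : ∀ᵐ ω ∂P, (P[fun ω' => Z ω' ^ 2 | m]) ω ≤ σ ^ 2) :
    Integrable (fun ω => Real.exp (φ (b ω * Z ω) - b ω ^ 2 * σ ^ 2 / 2)) P ∧
      P[fun ω => Real.exp (φ (b ω * Z ω) - b ω ^ 2 * σ ^ 2 / 2) | m] ≤ᵐ[P] fun _ => 1 := by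
  have hbm : Measurable[mΩ] b := (hb.mono hm).measurable
  have hZm : AEMeasurable Z P := hZ.aestronglyMeasurable.aemeasurable
  have hZ1 : Integrable Z P := hZ.integrable one_le_two
  have hZsq : Integrable (fun ω => Z ω ^ 2) P := hZ.integrable_sq
  have hpos : ∀ x : ℝ, 0 < 1 + x + x ^ 2 / 2 := fun x => by nlinarith [sq_nonneg (x + 1)]
  have hexp_ub : ∀ x : ℝ, Real.exp (φ x) ≤ 1 + x + x ^ 2 / 2 := fun x => by
    calc Real.exp (φ x) ≤ Real.exp (Real.log (1 + x + x ^ 2 / 2)) :=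
          Real.exp_le_exp.2 (hφ_ub x)
      _ = 1 + x + x ^ 2 / 2 := Real.exp_log (hpos x)
  have hYm : AEMeasurable (fun ω => Real.exp (φ (b ω * Z ω) - b ω ^ 2 * σ ^ 2 / 2)) P := by
    apply Real.measurable_exp.comp_aemeasurable
    exact (hφ_mono.measurable.comp_aemeasurable (hbm.aemeasurable.mul hZm)).sub
      ((((hbm.pow_const 2).mul_const _).div_const 2).aemeasurable)
  by_cases hσ : σ = 0
  · subst hσ
    have hZ0 : Z =ᵐ[P] fun _ => 0 := by
      have h1 : ∫ ω, (P[fun ω' => Z ω' ^ 2 | m]) ω ∂P = ∫ ω, Z ω ^ 2 ∂P :=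
        integral_condExp hm
      have h2 : ∫ ω, (P[fun ω' => Z ω' ^ 2 | m]) ω ∂P ≤ 0 := by
        have := integral_mono_ae integrable_condExp (integrable_const ((0:ℝ)^2))
          (by filter_upwards [hZvar] with ω hω using hω)
        simpa using this
      have h3 : (fun ω => Z ω ^ 2) =ᵐ[P] 0 := by
        refine (integral_eq_zero_iff_of_nonneg_ae (ae_of_all _ fun ω => sq_nonneg (Z ω))
          hZsq).1 (le_antisymm (by linarith [h1 ▸ h2]) (integral_nonneg fun ω => sq_nonneg _))
      filter_upwards [h3] with ω hω
      have : Z ω ^ 2 = 0 := hω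
      simpa using pow_eq_zero_iff (n := 2) (by norm_num) |>.1 this
    have hφ0 : φ 0 = 0 := by
      have h1 := hφ_ub 0
      have h2 := hφ_lb 0
      norm_num [Real.log_one] at h1 h2
      linarith
    have hY1 : (fun ω => Real.exp (φ (b ω * Z ω) - b ω ^ 2 * (0:ℝ) ^ 2 / 2)) =ᵐ[P]
        fun _ => 1 := by
      filter_upwards [hZ0] with ω hω
      simp only [hω]
      norm_num [hφ0]
    refine ⟨(integrable_const 1).congr hY1.symm, ?_⟩
    refine (condExp_congr_ae hY1).le.trans ?_
    rw [condExp_const hm]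
  · have hσ2 : 0 < σ ^ 2 := by positivity
    set A : Ω → ℝ := fun ω => Real.exp (-(b ω ^ 2 * σ ^ 2 / 2)) with hA_def
    set B : Ω → ℝ := fun ω => b ω * A ω with hB_def
    set C : Ω → ℝ := fun ω => b ω ^ 2 * A ω / 2 with hC_def
    have hA_pos : ∀ ω, 0 < A ω := fun ω => Real.exp_pos _
    have hA_le : ∀ ω, A ω ≤ 1 := fun ω => by
      calc A ω ≤ Real.exp 0 := Real.exp_le_exp.2 (neg_nonpos.2 (by positivity))
        _ = 1 := Real.exp_zero
    have hB_bdd : ∀ ω, ‖B ω‖ ≤ Real.sqrt 2 / |σ| := by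
      intro ω
      rw [Real.norm_eq_abs, hB_def]
      simp only
      rw [abs_mul, abs_of_pos (hA_pos ω)]
      exact catoni_damp_abs σ hσ (b ω)
    have hC_bdd : ∀ ω, ‖C ω‖ ≤ 1 / σ ^ 2 := by
      intro ω
      have h : b ω ^ 2 * Real.exp (-(b ω ^ 2 * σ ^ 2 / 2)) ≤ 2 / σ ^ 2 :=
        catoni_damp_sq σ hσ (b ω)
      have hCn : (0:ℝ) ≤ C ω := by
        show (0:ℝ) ≤ b ω ^ 2 * Real.exp (-(b ω ^ 2 * σ ^ 2 / 2)) / 2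
        positivity
      rw [Real.norm_eq_abs, abs_of_nonneg hCn]
      show b ω ^ 2 * Real.exp (-(b ω ^ 2 * σ ^ 2 / 2)) / 2 ≤ 1 / σ ^ 2
      have h2 : (2:ℝ) / σ ^ 2 = 2 * (1 / σ ^ 2) := by ring
      linarith
    have hbm' : Measurable[m] b := hb.measurable
    have hA_sm : StronglyMeasurable[m] A :=
      (Real.measurable_exp.comp (((hbm'.pow_const 2).mul_const _).div_const 2).neg
        ).stronglyMeasurable
    have hB_sm : StronglyMeasurable[m] B := (hbm'.mul hA_sm.measurable).stronglyMeasurable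
    have hC_sm : StronglyMeasurable[m] C :=
      (((hbm'.pow_const 2).mul hA_sm.measurable).div_const 2).stronglyMeasurable
    have hA_int : Integrable A P := by
      refine (integrable_const (1:ℝ)).mono' (hA_sm.mono hm).aestronglyMeasurable
        (ae_of_all _ fun ω => ?_)
      rw [Real.norm_eq_abs, abs_of_pos (hA_pos ω)]
      exact hA_le ω
    have hBZ_int : Integrable (B * Z) P :=
      hZ1.bdd_mul (hB_sm.mono hm).aestronglyMeasurable (ae_of_all _ hB_bdd)
    have hCZ_int : Integrable (C * fun ω => Z ω ^ 2) P :=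
      hZsq.bdd_mul (hC_sm.mono hm).aestronglyMeasurable (ae_of_all _ hC_bdd)
    set W : Ω → ℝ := A + (B * Z + C * fun ω => Z ω ^ 2) with hW_def
    have hW_eq : ∀ ω, W ω = A ω * (1 + b ω * Z ω + (b ω * Z ω) ^ 2 / 2) := by
      intro ω
      simp only [hW_def, hB_def, hC_def, Pi.add_apply, Pi.mul_apply]
      ring
    have hW_int : Integrable W P := hA_int.add (hBZ_int.add hCZ_int)
    have hY_le_W : ∀ ω, Real.exp (φ (b ω * Z ω) - b ω ^ 2 * σ ^ 2 / 2) ≤ W ω := by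
      intro ω
      rw [hW_eq ω, sub_eq_add_neg, Real.exp_add, mul_comm]
      exact mul_le_mul_of_nonneg_left (hexp_ub (b ω * Z ω)) (Real.exp_pos _).le
    have hY_int : Integrable (fun ω => Real.exp (φ (b ω * Z ω) - b ω ^ 2 * σ ^ 2 / 2)) P := by
      refine hW_int.mono' hYm.aestronglyMeasurable (ae_of_all _ fun ω => ?_)
      rw [Real.norm_eq_abs, abs_of_pos (Real.exp_pos _)]
      exact hY_le_W ω
    refine ⟨hY_int, ?_⟩
    have e0 : P[W | m] =ᵐ[P] P[A | m] + P[B * Z + C * fun ω => Z ω ^ 2 | m] := by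
      rw [hW_def]
      exact condExp_add hA_int (hBZ_int.add hCZ_int) m
    have e1 : P[B * Z + C * fun ω => Z ω ^ 2 | m]
        =ᵐ[P] P[B * Z | m] + P[C * fun ω => Z ω ^ 2 | m] := condExp_add hBZ_int hCZ_int m
    have e2 : P[A | m] = A := condExp_of_stronglyMeasurable hm hA_sm hA_int
    have e3 : P[B * Z | m] =ᵐ[P] B * P[Z | m] :=
      condExp_mul_of_stronglyMeasurable_left hB_sm hBZ_int hZ1
    have e4 : P[C * fun ω => Z ω ^ 2 | m] =ᵐ[P] C * P[fun ω => Z ω ^ 2 | m] :=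
      condExp_mul_of_stronglyMeasurable_left hC_sm hCZ_int hZsq
    have key : P[W | m] ≤ᵐ[P] fun _ => 1 := by
      filter_upwards [e0, e1, e3, e4, hZmean, hZvar] with ω h0 h1 h3 h4 hz hv
      simp only [Pi.add_apply, Pi.mul_apply] at h0 h1 h3 h4
      rw [h0, h1, h3, h4, e2]
      have hz' : (P[Z | m]) ω = 0 := hz
      rw [hz', mul_zero]
      have hC_nonneg : 0 ≤ C ω := by
        rw [hC_def]; positivity
      have hCv : C ω * (P[fun ω' => Z ω' ^ 2 | m]) ω ≤ C ω * σ ^ 2 :=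
        mul_le_mul_of_nonneg_left hv hC_nonneg
      have hfin : A ω + C ω * σ ^ 2 ≤ 1 := by
        have hmul : Real.exp (-(b ω ^ 2 * σ ^ 2 / 2)) * Real.exp (b ω ^ 2 * σ ^ 2 / 2) = 1 := by
          rw [← Real.exp_add]; simp
        have hexp := Real.add_one_le_exp (b ω ^ 2 * σ ^ 2 / 2)
        have hEpos : 0 < Real.exp (-(b ω ^ 2 * σ ^ 2 / 2)) := Real.exp_pos _
        simp only [hA_def, hC_def]
        nlinarith [hmul, hexp, hEpos]
      show A ω + (0 + C ω * (P[fun ω' => Z ω' ^ 2 | m]) ω) ≤ 1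
      linarith
    exact (condExp_mono hY_int hW_int (ae_of_all _ hY_le_W)).trans key

/-- One-sided Catoni supermartingale. -/
private theorem catoni_one
    [IsProbabilityMeasure P]
    (ℱ : Filtration ℕ mΩ) (X l : ℕ → Ω → ℝ) (μ σ : ℝ) (φ : ℝ → ℝ)
    (hφ_mono : Monotone φ)
    (hφ_lb : ∀ x : ℝ, -Real.log (1 - x + x ^ 2 / 2) ≤ φ x)
    (hφ_ub : ∀ x : ℝ, φ x ≤ Real.log (1 + x + x ^ 2 / 2))
    (hX_adapted : StronglyAdapted ℱ X)
    (hX_sq : ∀ t, 1 ≤ t → MemLp (X t) 2 P)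
    (hmean : ∀ t, 1 ≤ t → P[X t | ℱ (t - 1)] =ᵐ[P] fun _ => μ)
    (hvar : ∀ t, 1 ≤ t →
      ∀ᵐ ω ∂P, (P[fun ω' => (X t ω' - μ) ^ 2 | ℱ (t - 1)]) ω ≤ σ ^ 2)
    (hl_pred : ∀ t, 1 ≤ t → StronglyMeasurable[ℱ (t - 1)] (l t)) :
    Supermartingale
      (fun t ω => ∏ i ∈ Finset.Icc 1 t,
        Real.exp (φ (l i ω * (X i ω - μ)) - (l i ω) ^ 2 * σ ^ 2 / 2)) ℱ P := by
  set Y : ℕ → Ω → ℝ :=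
    fun t ω => Real.exp (φ (l t ω * (X t ω - μ)) - (l t ω) ^ 2 * σ ^ 2 / 2) with hY_def
  have hY_nonneg : ∀ t ω, 0 ≤ Y t ω := fun t ω => (Real.exp_pos _).le
  have hY_sm : ∀ i, 1 ≤ i → StronglyMeasurable[ℱ i] (Y i) := by
    intro i hi
    have hlm : Measurable[ℱ i] (l i) :=
      ((hl_pred i hi).mono (ℱ.mono (Nat.sub_le i 1))).measurable
    have hXm : Measurable[ℱ i] (X i) := (hX_adapted i).measurable
    exact (Real.measurable_exp.comp
      ((hφ_mono.measurable.comp (hlm.mul (hXm.sub measurable_const))).sub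
        (((hlm.pow_const 2).mul_const _).div_const 2))).stronglyMeasurable
  have hstep : ∀ n : ℕ, Integrable (Y (n + 1)) P ∧ P[Y (n + 1) | ℱ n] ≤ᵐ[P] fun _ => 1 := by
    intro n
    have ht : 1 ≤ n + 1 := Nat.le_add_left 1 n
    have hXint : Integrable (X (n + 1)) P := (hX_sq _ ht).integrable one_le_two
    have hZ2 : MemLp (fun ω => X (n + 1) ω - μ) 2 P := (hX_sq _ ht).sub (memLp_const μ)
    have hmean' : P[fun ω => X (n + 1) ω - μ | ℱ n] =ᵐ[P] fun _ => 0 := by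
      have h1 := condExp_sub (m := ℱ n) (μ := P) (f := X (n + 1)) (g := fun _ => μ)
        hXint (integrable_const μ)
      rw [condExp_const (ℱ.le n)] at h1
      have h1' : P[fun ω => X (n + 1) ω - μ | ℱ n]
          =ᵐ[P] P[X (n + 1) | ℱ n] - fun _ => μ := h1
      have hm2 := hmean (n + 1) ht
      simp only [Nat.add_sub_cancel] at hm2
      filter_upwards [h1', hm2] with ω e1 e2
      rw [e1, Pi.sub_apply, e2]
      simp
    exact catoni_step (ℱ.le n) hφ_mono hφ_lb hφ_ub σ (hl_pred (n + 1) ht) hZ2 hmean'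
      (hvar (n + 1) ht)
  have hM_sm : ∀ t, StronglyMeasurable[ℱ t] fun ω => ∏ i ∈ Finset.Icc 1 t, Y i ω := by
    intro t
    refine Finset.stronglyMeasurable_fun_prod _ fun i hi => ?_
    rw [Finset.mem_Icc] at hi
    exact (hY_sm i hi.1).mono (ℱ.mono hi.2)
  have hM_nonneg : ∀ t ω, (0:ℝ) ≤ ∏ i ∈ Finset.Icc 1 t, Y i ω := fun t ω =>
    Finset.prod_nonneg fun i _ => hY_nonneg i ω
  have hsplit : ∀ n : ℕ, (fun ω => ∏ i ∈ Finset.Icc 1 (n + 1), Y i ω)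
      = (fun ω => ∏ i ∈ Finset.Icc 1 n, Y i ω) * Y (n + 1) := by
    intro n
    funext ω
    exact Finset.prod_Icc_succ_top (Nat.le_add_left 1 n) _
  have hM_int : ∀ t, Integrable (fun ω => ∏ i ∈ Finset.Icc 1 t, Y i ω) P := by
    intro t
    induction t with
    | zero =>
      simp only [show Finset.Icc 1 0 = (∅ : Finset ℕ) by simp, Finset.prod_empty]
      exact integrable_const 1
    | succ n ih =>
      rw [hsplit n]
      exact catoni_integrable_mul (ℱ.le n) (hM_sm n) (fun ω => hM_nonneg n ω) ih
        ((hY_sm (n + 1) (Nat.le_add_left 1 n)).mono (ℱ.le (n + 1))).aestronglyMeasurable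
        (hY_nonneg (n + 1)) (hstep n).1 (hstep n).2
  refine supermartingale_nat (fun t => hM_sm t) hM_int ?_
  intro n
  have : P[fun ω => ∏ i ∈ Finset.Icc 1 (n + 1), Y i ω | ℱ n]
      ≤ᵐ[P] fun ω => ∏ i ∈ Finset.Icc 1 n, Y i ω := by
    rw [hsplit n]
    exact catoni_condexp_mul_le (ℱ.le n) (hM_sm n) (fun ω => hM_nonneg n ω) (hM_int n)
      ((hY_sm (n + 1) (Nat.le_add_left 1 n)).mono (ℱ.le (n + 1))).aestronglyMeasurable
      (hY_nonneg (n + 1)) (hstep n).1 (hstep n).2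
  exact this

end CatoniAux

/-- **Catoni supermartingales.** Under constant conditional mean `μ` and conditional
variance bound `σ²`, for any predictable process `l` and any Catoni-type influence
function `φ`, the processes
`M_t^C = ∏_{i=1}^t exp(φ(l i (X i - μ)) - l i² σ²/2)` and
`N_t^C = ∏_{i=1}^t exp(-φ(l i (X i - μ)) - l i² σ²/2)` are nonnegative
supermartingales. -/
theorem catoni_supermartingales
    {Ω : Type*} {mΩ : MeasurableSpace Ω} {P : Measure Ω} [IsProbabilityMeasure P]
    (ℱ : Filtration ℕ mΩ) (X l : ℕ → Ω → ℝ) (μ σ : ℝ) (φ : ℝ → ℝ)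
    (hφ_mono : Monotone φ)
    (hφ_lb : ∀ x : ℝ, -Real.log (1 - x + x ^ 2 / 2) ≤ φ x)
    (hφ_ub : ∀ x : ℝ, φ x ≤ Real.log (1 + x + x ^ 2 / 2))
    (hX_adapted : StronglyAdapted ℱ X)
    (hX_sq : ∀ t, 1 ≤ t → MemLp (X t) 2 P)
    (hmean : ∀ t, 1 ≤ t → P[X t | ℱ (t - 1)] =ᵐ[P] fun _ => μ)
    (hvar : ∀ t, 1 ≤ t →
      ∀ᵐ ω ∂P, (P[fun ω' => (X t ω' - μ) ^ 2 | ℱ (t - 1)]) ω ≤ σ ^ 2)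
    (hl_pred : ∀ t, 1 ≤ t → StronglyMeasurable[ℱ (t - 1)] (l t)) :
    (Supermartingale
      (fun t ω => ∏ i ∈ Finset.Icc 1 t,
        Real.exp (φ (l i ω * (X i ω - μ)) - (l i ω) ^ 2 * σ ^ 2 / 2)) ℱ P ∧
      ∀ t ω, 0 ≤ ∏ i ∈ Finset.Icc 1 t,
        Real.exp (φ (l i ω * (X i ω - μ)) - (l i ω) ^ 2 * σ ^ 2 / 2)) ∧
    (Supermartingale
      (fun t ω => ∏ i ∈ Finset.Icc 1 t,
        Real.exp (-φ (l i ω * (X i ω - μ)) - (l i ω) ^ 2 * σ ^ 2 / 2)) ℱ P ∧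
      ∀ t ω, 0 ≤ ∏ i ∈ Finset.Icc 1 t,
        Real.exp (-φ (l i ω * (X i ω - μ)) - (l i ω) ^ 2 * σ ^ 2 / 2)) := by
  refine ⟨⟨catoni_one ℱ X l μ σ φ hφ_mono hφ_lb hφ_ub hX_adapted hX_sq hmean hvar hl_pred,
    fun t ω => Finset.prod_nonneg fun i _ => (Real.exp_pos _).le⟩, ?_,
    fun t ω => Finset.prod_nonneg fun i _ => (Real.exp_pos _).le⟩
  have h2 := catoni_one ℱ X (fun t ω => -l t ω) μ σ (fun x => -φ (-x))
    (fun x y hxy => neg_le_neg (hφ_mono (neg_le_neg hxy)))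
    (fun x => by
      have h := hφ_ub (-x)
      rw [show (1 : ℝ) + -x + (-x) ^ 2 / 2 = 1 - x + x ^ 2 / 2 by ring] at h
      exact neg_le_neg h)
    (fun x => by
      have h := hφ_lb (-x)
      rw [show (1 : ℝ) - -x + (-x) ^ 2 / 2 = 1 + x + x ^ 2 / 2 by ring] at h
      exact neg_le.mp h)
    hX_adapted hX_sq hmean hvar (fun t ht => (hl_pred t ht).neg)
  have heq : (fun (t : ℕ) (ω : Ω) => ∏ i ∈ Finset.Icc 1 t,
      Real.exp ((fun x => -φ (-x)) ((fun t ω => -l t ω) i ω * (X i ω - μ))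
        - ((fun t ω => -l t ω) i ω) ^ 2 * σ ^ 2 / 2))
      = fun (t : ℕ) (ω : Ω) => ∏ i ∈ Finset.Icc 1 t,
        Real.exp (-φ (l i ω * (X i ω - μ)) - (l i ω) ^ 2 * σ ^ 2 / 2) := by
    funext t ω
    refine Finset.prod_congr rfl fun i _ => ?_
    simp only [neg_mul, neg_neg, neg_sq]
  rw [heq] at h2
  exact h2
end
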